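/- arXiv:math/0310056 — 10 statements merged into one kernel-verified Lean document; each statement's English description precedes it below -/
import Mathlib

section
/- Let G be a finite simple graph in which every vertex has degree at most d, and let n be an integer with n ≥ d + 2. Then any two proper n-colorings φ, ψ of G (i.e., graph homomorphisms from G to the complete graph K_n) can be joined by a finite sequence of proper n-colorings φ = c_0, c_1, …, c_N = ψ such that for each i the colorings c_i and c_{i+1} differ at exactly one vertex of G. (Equivalently, the complex Hom(G, K_n) is connected.) -/
/-!
Walk from `φ` towards `ψ`, fixing one disagreeing vertex `v` at a time without creating new
disagreements. To give `v` its target colour `b = ψ v`, first recolour every neighbour of `v`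
that currently carries `b`: such a neighbour sees at most `d` colours around it, so with
`n ≥ d + 2` colours it has a free colour different from `b`. Those neighbours already disagreed
with `ψ` (as `ψ` is proper, `ψ w ≠ b`), and afterwards `v` itself can be recoloured to `b`.
-/

namespace SimpleGraph

variable {V α : Type*} {G : SimpleGraph V}

/-- The vertices of `Hom(G, K_α)`. -/
abbrev ProperColoring (G : SimpleGraph V) (α : Type*) :=
  {c : V → α // ∀ x y : V, G.Adj x y → c x ≠ c y}

namespace ProperColoring

/-- The edges of `Hom(G, K_α)`. -/
def DifferAtOneVertex (c c' : G.ProperColoring α) : Prop :=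
  ∃! v : V, c.1 v ≠ c'.1 v

def recolor [DecidableEq V] (c : G.ProperColoring α) (v : V) (a : α)
    (ha : ∀ u, G.Adj v u → a ≠ c.1 u) : G.ProperColoring α :=
  ⟨Function.update c.1 v a, fun x y hxy => by
    rcases eq_or_ne x v with rfl | hx
    · rw [Function.update_self, Function.update_of_ne (G.ne_of_adj hxy).symm]
      exact ha y hxy
    · rw [Function.update_of_ne hx]
      rcases eq_or_ne y v with rfl | hy
      · rw [Function.update_self]
        exact (ha x hxy.symm).symm
      · rw [Function.update_of_ne hy]
        exact c.2 x y hxy⟩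

variable [DecidableEq V]

@[simp]
lemma recolor_apply_self (c : G.ProperColoring α) (v : V) (a : α) (ha) :
    (c.recolor v a ha).1 v = a :=
  Function.update_self _ _ _

lemma recolor_apply_of_ne (c : G.ProperColoring α) {v x : V} (a : α) (ha) (hx : x ≠ v) :
    (c.recolor v a ha).1 x = c.1 x :=
  Function.update_of_ne hx _ _

lemma differAtOneVertex_recolor (c : G.ProperColoring α) {v : V} {a : α} (ha)
    (hv : c.1 v ≠ a) : DifferAtOneVertex c (c.recolor v a ha) := by
  refine ⟨v, by simpa using hv, fun x hx => ?_⟩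
  by_contra hxv
  exact hx (recolor_apply_of_ne c a ha hxv).symm

end ProperColoring

open ProperColoring

lemma exists_ne_forall_adj_ne [Fintype α] [DecidableEq α] (w : V) [Fintype (G.neighborSet w)]
    (c : V → α) (b : α) (hw : G.degree w + 2 ≤ Fintype.card α) :
    ∃ a, a ≠ b ∧ ∀ u, G.Adj w u → a ≠ c u := by
  have hcard : (insert b ((G.neighborFinset w).image c)).card < (Finset.univ : Finset α).card := by
    calc (insert b ((G.neighborFinset w).image c)).card
        ≤ ((G.neighborFinset w).image c).card + 1 := Finset.card_insert_le _ _
      _ ≤ G.degree w + 1 := by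
          rw [← card_neighborFinset_eq_degree]
          exact Nat.add_le_add_right Finset.card_image_le 1
      _ < (Finset.univ : Finset α).card := by rw [Finset.card_univ]; omega
  obtain ⟨a, -, ha⟩ := Finset.exists_mem_notMem_of_card_lt_card hcard
  rw [Finset.mem_insert, not_or] at ha
  exact ⟨a, ha.1, fun u hu hau => ha.2 (hau ▸ Finset.mem_image_of_mem c
    ((mem_neighborFinset G w u).2 hu))⟩

variable [DecidableEq V] [G.LocallyFinite] [Fintype α] [DecidableEq α]

lemma exists_reflTransGen_forall_adj_ne (hα : ∀ u, G.degree u + 2 ≤ Fintype.card α)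
    (c : G.ProperColoring α) (v : V) (b : α) :
    ∃ c', Relation.ReflTransGen DifferAtOneVertex c c' ∧ (∀ u, G.Adj v u → c'.1 u ≠ b) ∧
      ∀ x, c'.1 x ≠ c.1 x → G.Adj v x ∧ c.1 x = b := by
  induction hk : ((G.neighborFinset v).filter (fun u => c.1 u = b)).card
    generalizing c with
  | zero =>
    rw [Finset.card_eq_zero, Finset.filter_eq_empty_iff] at hk
    exact ⟨c, .refl, fun u hu => hk ((mem_neighborFinset G v u).2 hu), fun x hx => absurd rfl hx⟩
  | succ k ih =>
    obtain ⟨w, hw⟩ : ((G.neighborFinset v).filter fun u => c.1 u = b).Nonempty :=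
      Finset.card_pos.1 (by omega)
    rw [Finset.mem_filter, mem_neighborFinset] at hw
    obtain ⟨hvw, hcw⟩ := hw
    obtain ⟨a, hab, ha⟩ := exists_ne_forall_adj_ne w c.1 b (hα w)
    set c₂ := c.recolor w a ha
    have hfilter : (G.neighborFinset v).filter (fun u => c₂.1 u = b) =
        ((G.neighborFinset v).filter (fun u => c.1 u = b)).erase w := by
      ext u
      rcases eq_or_ne u w with rfl | huw
      · simp [c₂, hab]
      · simp [c₂, recolor_apply_of_ne c a ha huw, huw]
    have hk₂ : ((G.neighborFinset v).filter (fun u => c₂.1 u = b)).card = k := by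
      rw [hfilter, Finset.card_erase_of_mem (by simp [hvw, hcw]), hk, Nat.add_sub_cancel]
    obtain ⟨c', hchain, hc'b, hc'changed⟩ := ih c₂ hk₂
    refine ⟨c', .head (differAtOneVertex_recolor c ha (hcw ▸ hab.symm)) hchain, hc'b,
      fun x hx => ?_⟩
    rcases eq_or_ne x w with rfl | hxw
    · exact ⟨hvw, hcw⟩
    · rw [← recolor_apply_of_ne c a ha hxw] at hx ⊢
      exact hc'changed x hx

lemma exists_reflTransGen_apply_eq (hα : ∀ u, G.degree u + 2 ≤ Fintype.card α)
    (c ψ : G.ProperColoring α) (v : V) :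
    ∃ c', Relation.ReflTransGen DifferAtOneVertex c c' ∧ c'.1 v = ψ.1 v ∧
      ∀ x, c'.1 x ≠ ψ.1 x → c.1 x ≠ ψ.1 x := by
  by_cases hv : c.1 v = ψ.1 v
  · exact ⟨c, .refl, hv, fun _ => id⟩
  obtain ⟨c₁, hchain, hc₁, hchanged⟩ := exists_reflTransGen_forall_adj_ne hα c v (ψ.1 v)
  have hc₁v : c₁.1 v = c.1 v := by
    by_contra h
    exact G.irrefl (hchanged v h).1
  refine ⟨c₁.recolor v (ψ.1 v) (fun u hu => (hc₁ u hu).symm),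
    hchain.tail (differAtOneVertex_recolor c₁ _ (hc₁v ▸ hv)), by simp, fun x hx => ?_⟩
  rcases eq_or_ne x v with rfl | hxv
  · simp at hx
  rw [recolor_apply_of_ne _ _ _ hxv] at hx
  by_cases hx₁ : c₁.1 x = c.1 x
  · rwa [← hx₁]
  · obtain ⟨hvx, hcx⟩ := hchanged x hx₁
    rw [hcx]
    exact ψ.2 v x hvx

lemma reflTransGen_differAtOneVertex [Fintype V]
    (hα : ∀ u, G.degree u + 2 ≤ Fintype.card α) (φ ψ : G.ProperColoring α) :
    Relation.ReflTransGen DifferAtOneVertex φ ψ := by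
  induction hk : (Finset.univ.filter (fun x => φ.1 x ≠ ψ.1 x)).card using Nat.strong_induction_on
    generalizing φ with
  | _ k ih =>
  by_cases hφψ : φ = ψ
  · exact hφψ ▸ .refl
  obtain ⟨v, hv⟩ : ∃ v, φ.1 v ≠ ψ.1 v := by
    by_contra! h
    exact hφψ (Subtype.ext (funext h))
  obtain ⟨c, hchain, hcv, hdis⟩ := exists_reflTransGen_apply_eq hα φ ψ v
  have hlt : (Finset.univ.filter (fun x => c.1 x ≠ ψ.1 x)).card < k := by
    refine hk ▸ Finset.card_lt_card (Finset.ssubset_iff_of_subset ?_ |>.2 ⟨v, ?_, ?_⟩)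
    · exact Finset.monotone_filter_right _ fun x _ => hdis x
    · simpa using hv
    · simpa using hcv
  exact hchain.trans (ih _ hlt c rfl)

end SimpleGraph

/-- If every vertex of the finite simple graph `G` has degree at most `d`
and `n ≥ d + 2`, then any two proper `n`-colorings of `G` are connected by a sequence of
proper `n`-colorings, consecutive ones differing at exactly one vertex
(i.e. `Hom(G, K_n)` is connected). -/
theorem hom_G_Kn_connected {V : Type} [Fintype V] (G : SimpleGraph V)
    [DecidableRel G.Adj] (d n : ℕ) (hdeg : ∀ v : V, G.degree v ≤ d)
    (hn : d + 2 ≤ n)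
    (φ ψ : {c : V → Fin n // ∀ x y : V, G.Adj x y → c x ≠ c y}) :
    Relation.ReflTransGen
      (fun c c' : {c : V → Fin n // ∀ x y : V, G.Adj x y → c x ≠ c y} =>
        ∃! v : V, c.1 v ≠ c'.1 v) φ ψ := by
  classical
  exact SimpleGraph.reflTransGen_differAtOneVertex
    (fun v => (Fintype.card_fin n).symm ▸ (Nat.add_le_add_right (hdeg v) 2).trans hn) φ ψ
end

section
/- Let G be a finite graph (a finite vertex set V with a symmetric edge relation E, loops allowed), and let S, S' ⊆ V be such that G reduces both to the induced subgraph G[S] and to the induced subgraph G[S'], and both G[S] and G[S'] are irreducible. Then G[S] and G[S'] are isomorphic as graphs, i.e., there is a bijection g : S → S' with E(x,y) ⟺ E(g(x),g(y)) for all x, y ∈ S. -/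
/-- `u` dominates `v` in the subgraph of the relation `E` induced on the set `A`:
both lie in `A`, they are distinct, and every neighbor of `v` inside `A` is also
a neighbor of `u`. -/
def DomIn {V : Type} (E : V → V → Prop) (A : Set V) (u v : V) : Prop :=
  u ∈ A ∧ v ∈ A ∧ u ≠ v ∧ ∀ x ∈ A, E v x → E u x

/-- The graph `(V, E)` reduces to the induced subgraph on `S`: the vertices outside `S`
can be ordered `w₁, …, w_k` so that each `wᵢ` is dominated by some other vertex in the
induced subgraph on `V ∖ {w₁, …, w_{i-1}}`. -/
def ReducesTo {V : Type} (E : V → V → Prop) (S : Set V) : Prop :=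
  ∃ w : List V, w.Nodup ∧ (∀ x : V, x ∈ w ↔ x ∉ S) ∧
    ∀ i : Fin w.length, ∃ u : V,
      DomIn E {x : V | x ∉ w.take i.val} u (w.get i)

/-- The induced subgraph on `S` is irreducible: no vertex of it is dominated by
another one of its vertices. -/
def IrreducibleOn {V : Type} (E : V → V → Prop) (S : Set V) : Prop :=
  ∀ u ∈ S, ∀ v ∈ S, u ≠ v → ¬ (∀ x ∈ S, E v x → E u x)

/-! Removing a dominated vertex is confluent up to isomorphism: if `a` is dominated in `G[A]` and
`A` dismantles to an irreducible `S`, then `A ∖ {a}` dismantles to an irreducible set isomorphic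
to `S`. By induction on the dismantling of `A`, whose first removed vertex is `b ≠ a`: if `a` and
`b` are twins, the transposition `(a b)` is an automorphism of `G[A]` carrying `A ∖ {b}` to
`A ∖ {a}`; otherwise `a` stays dominated in `A ∖ {b}` and `b` in `A ∖ {a}`, so the two removals
commute. Induction on one of two dismantlings of `V` then gives the theorem. -/

section Dismantling

open Set Equiv

variable {V W : Type} {E : V → V → Prop} {A B S : Set V} {a b u v : V}

variable (E) in
inductive Dismantles : Set V → Set V → Prop
  | refl (A : Set V) : Dismantles A A
  | step {A S : Set V} {u a : V} : DomIn E A u a → Dismantles (A \ {a}) S → Dismantles A S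

theorem DomIn.mono (h : DomIn E A u a) (hBA : B ⊆ A) (hu : u ∈ B) (ha : a ∈ B) :
    DomIn E B u a :=
  ⟨hu, ha, h.2.2.1, fun x hx => h.2.2.2 x (hBA hx)⟩

theorem DomIn.trans (hvb : DomIn E A v b) (hba : DomIn E A b a) (hva : v ≠ a) : DomIn E A v a :=
  ⟨hvb.1, hba.2.1, hva, fun x hx h => hvb.2.2.2 x hx (hba.2.2.2 x hx h)⟩

theorem Dismantles.subset (h : Dismantles E A S) : S ⊆ A := by
  induction h with
  | refl => rfl
  | step _ _ ih => exact ih.trans sdiff_subset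

theorem Dismantles.eq_of_irreducibleOn (h : Dismantles E A S) (hA : IrreducibleOn E A) :
    S = A := by
  cases h with
  | refl => rfl
  | step hua => exact absurd hua.2.2.2 (hA _ hua.1 _ hua.2.1 hua.2.2.1)

theorem Dismantles.of_domIn_take (w : List V) (A : Set V)
    (hw : ∀ i : Fin w.length, ∃ u, DomIn E (A \ {x | x ∈ w.take i}) u (w.get i)) :
    Dismantles E A (A \ {x | x ∈ w}) := by
  induction w generalizing A with
  | nil => simpa using Dismantles.refl A
  | cons a w ih =>
    obtain ⟨u, hu⟩ := hw ⟨0, w.length.succ_pos⟩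
    have hA : A \ {x | x ∈ a :: w} = (A \ {a}) \ {x | x ∈ w} := by
      ext; simp only [mem_sdiff, mem_ofPred_eq, List.mem_cons, mem_singleton_iff]; tauto
    refine .step (u := u) (by simpa using hu) (hA ▸ ih _ fun i => ?_)
    obtain ⟨u, hu⟩ := hw i.succ
    have hAi : A \ {x | x ∈ (a :: w).take (i + 1)} = (A \ {a}) \ {x | x ∈ w.take i} := by
      ext; simp only [mem_sdiff, mem_ofPred_eq, List.take_succ_cons, List.mem_cons,
        mem_singleton_iff]; tauto
    exact ⟨u, hAi ▸ hu⟩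

theorem ReducesTo.dismantles (h : ReducesTo E S) : Dismantles E univ S := by
  obtain ⟨w, -, hw, hdom⟩ := h
  have hS : S = univ \ {x | x ∈ w} := by ext x; simp [hw]
  exact hS ▸ Dismantles.of_domIn_take w univ fun i => by rw [← compl_eq_univ_sdiff]; exact hdom i

section Transport

variable {F : W → W → Prop} (σ : V ≃ W)

theorem Dismantles.image (h : Dismantles E A S)
    (hσ : ∀ x ∈ A, ∀ y ∈ A, F (σ x) (σ y) ↔ E x y) : Dismantles F (σ '' A) (σ '' S) := by
  induction h with
  | refl => exact .refl _
  | @step A S u a hua _ ih =>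
    refine .step (u := σ u) (a := σ a) ⟨mem_image_of_mem σ hua.1, mem_image_of_mem σ hua.2.1,
      σ.injective.ne hua.2.2.1, ?_⟩ ?_
    · rintro _ ⟨x, hx, rfl⟩ hax
      exact (hσ u hua.1 x hx).2 <| hua.2.2.2 x hx <| (hσ a hua.2.1 x hx).1 hax
    · rw [← image_singleton, ← image_sdiff σ.injective]
      exact ih fun x hx y hy => hσ x hx.1 y hy.1

theorem IrreducibleOn.image (h : IrreducibleOn E S)
    (hσ : ∀ x ∈ S, ∀ y ∈ S, F (σ x) (σ y) ↔ E x y) : IrreducibleOn F (σ '' S) := by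
  rintro _ ⟨p, hp, rfl⟩ _ ⟨q, hq, rfl⟩ hpq hdom
  refine h p hp q hq (ne_of_apply_ne σ hpq) fun x hx hqx => ?_
  exact (hσ p hp x hx).1 <| hdom (σ x) (mem_image_of_mem σ hx) <| (hσ q hq x hx).2 hqx

def subrelIsoImage (hσ : ∀ x ∈ S, ∀ y ∈ S, F (σ x) (σ y) ↔ E x y) :
    Subrel E (· ∈ S) ≃r Subrel F (· ∈ σ '' S) where
  toEquiv := σ.image S
  map_rel_iff' {x y} := hσ x x.2 y y.2

end Transport

theorem swap_rel_iff_of_twin [Std.Symm E] [DecidableEq V] (ha : a ∈ A) (hb : b ∈ A)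
    (htwin : ∀ x ∈ A, E a x ↔ E b x) :
    ∀ x ∈ A, ∀ y ∈ A, E (swap a b x) (swap a b y) ↔ E x y := by
  have hmem : ∀ x ∈ A, swap a b x ∈ A := fun x hx => by
    rw [swap_apply_def]; split_ifs <;> assumption
  have hleft : ∀ x ∈ A, ∀ y ∈ A, E (swap a b x) y ↔ E x y := fun x hx y hy => by
    rw [swap_apply_def]
    split_ifs with hxa hxb
    · exact hxa ▸ (htwin y hy).symm
    · exact hxb ▸ htwin y hy
    · rfl
  intro x hx y hy
  calc E (swap a b x) (swap a b y) ↔ E x (swap a b y) := hleft x hx _ (hmem y hy)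
    _ ↔ E (swap a b y) x := Std.Symm.iff ..
    _ ↔ E y x := hleft y hy x hx
    _ ↔ E x y := Std.Symm.iff ..

theorem Dismantles.exists_sdiff_of_twin [Std.Symm E] (ha : a ∈ A) (hb : b ∈ A) (hab : a ≠ b)
    (htwin : ∀ x ∈ A, E a x ↔ E b x) (h : Dismantles E (A \ {b}) S) (hS : IrreducibleOn E S) :
    ∃ T, Dismantles E (A \ {a}) T ∧ IrreducibleOn E T ∧
      Nonempty (Subrel E (· ∈ S) ≃r Subrel E (· ∈ T)) := by
  classical
  have hσ := swap_rel_iff_of_twin ha hb htwin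
  have hσS : ∀ x ∈ S, ∀ y ∈ S, E (swap a b x) (swap a b y) ↔ E x y := fun x hx y hy =>
    hσ x (h.subset hx).1 y (h.subset hy).1
  have himage : swap a b '' (A \ {b}) = A \ {a} := by
    rw [image_swap_of_mem_of_notMem (s := A \ {b}) ⟨ha, hab⟩ (fun h => h.2 rfl), insert_sdiff_singleton,
      insert_eq_of_mem hb]
  refine ⟨swap a b '' S, himage ▸ h.image _ fun x hx y hy => hσ x hx.1 y hy.1,
    hS.image _ hσS, ⟨subrelIsoImage _ hσS⟩⟩

theorem DomIn.exists_domIn_sdiff (hua : DomIn E A u a) (hvb : DomIn E A v b) (hab : a ≠ b)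
    (hnot_twin : u = b → v ≠ a) : ∃ u', DomIn E (A \ {b}) u' a := by
  obtain rfl | hub := eq_or_ne u b
  · have hva := hnot_twin rfl
    exact ⟨v, (hvb.trans hua hva).mono sdiff_subset ⟨hvb.1, hvb.2.2.1⟩ ⟨hua.2.1, hab⟩⟩
  · exact ⟨u, hua.mono sdiff_subset ⟨hua.1, hub⟩ ⟨hua.2.1, hab⟩⟩

theorem Dismantles.exists_sdiff_of_domIn [Std.Symm E] (h : Dismantles E A S)
    (hS : IrreducibleOn E S) (hua : DomIn E A u a) :
    ∃ T, Dismantles E (A \ {a}) T ∧ IrreducibleOn E T ∧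
      Nonempty (Subrel E (· ∈ S) ≃r Subrel E (· ∈ T)) := by
  induction h generalizing u a with
  | refl => exact absurd hua.2.2.2 (hS _ hua.1 _ hua.2.1 hua.2.2.1)
  | @step A S v b hvb hrest ih =>
    obtain rfl | hab := eq_or_ne a b
    · exact ⟨S, hrest, hS, ⟨RelIso.refl _⟩⟩
    by_cases htwin : u = b ∧ v = a
    · obtain ⟨rfl, rfl⟩ := htwin
      exact hrest.exists_sdiff_of_twin hua.2.1 hvb.2.1 hab
        (fun x hx => ⟨hua.2.2.2 x hx, hvb.2.2.2 x hx⟩) hS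
    obtain ⟨u', hu'⟩ := hua.exists_domIn_sdiff hvb hab fun hub hva => htwin ⟨hub, hva⟩
    obtain ⟨v', hv'⟩ := hvb.exists_domIn_sdiff hua hab.symm fun hva hub => htwin ⟨hub, hva⟩
    obtain ⟨T, hT, hirr, hiso⟩ := ih hS hu'
    exact ⟨T, .step hv' (sdiff_sdiff_comm ▸ hT), hirr, hiso⟩

theorem Dismantles.nonempty_relIso [Std.Symm E] {S' : Set V} (h : Dismantles E A S)
    (h' : Dismantles E A S') (hS : IrreducibleOn E S) (hS' : IrreducibleOn E S') :
    Nonempty (Subrel E (· ∈ S) ≃r Subrel E (· ∈ S')) := by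
  induction h generalizing S' with
  | refl A => exact h'.eq_of_irreducibleOn hS ▸ ⟨RelIso.refl _⟩
  | step hua _ ih =>
    obtain ⟨T, hT, hirrT, ⟨f⟩⟩ := h'.exists_sdiff_of_domIn hS' hua
    obtain ⟨g⟩ := ih hT hS hirrT
    exact ⟨g.trans f.symm⟩

end Dismantling

theorem irreducible_reductions_isomorphic_general {V : Type}
    (E : V → V → Prop) (hsymm : Symmetric E) (S S' : Set V)
    (hS : ReducesTo E S) (hS' : ReducesTo E S')
    (hirr : IrreducibleOn E S) (hirr' : IrreducibleOn E S') :
    ∃ g : S ≃ S', ∀ x y : S, E x.1 y.1 ↔ E (g x).1 (g y).1 := by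
  have : Std.Symm E := symm_def.mpr hsymm
  obtain ⟨f⟩ := hS.dismantles.nonempty_relIso hS'.dismantles hirr hirr'
  exact ⟨f.toEquiv, fun x y => f.map_rel_iff.symm⟩

/-- if a finite graph (loops allowed) reduces to two irreducible induced
subgraphs `G[S]` and `G[S']`, then these are isomorphic. -/
theorem irreducible_reductions_isomorphic {V : Type} [Fintype V]
    (E : V → V → Prop) (hsymm : Symmetric E) (S S' : Set V)
    (hS : ReducesTo E S) (hS' : ReducesTo E S')
    (hirr : IrreducibleOn E S) (hirr' : IrreducibleOn E S') :
    ∃ g : S ≃ S', ∀ x y : S, E x.1 y.1 ↔ E (g x).1 (g y).1 :=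
  irreducible_reductions_isomorphic_general E hsymm S S' hS hS' hirr hirr'
end

section
/- For all integers n > m ≥ 2, the Euler characteristics of the complexes Hom(K_m, K_n) satisfy the recurrence χ(m,n) = m·χ(m−1, n−1) − (m−1)·χ(m, n−1). -/
open Finset Classical


open Finset in
open Classical in
/-- The (non-reduced) Euler characteristic of `Hom(K_m, K_n)`:
`χ(m,n) = Σ_η (−1)^{(Σ_i |η(i)|) − m}`, where `η` ranges over all functions from
`{1,…,m}` to nonempty subsets of `{1,…,n}` with pairwise disjoint values. -/
noncomputable def homEulerChar (m n : ℕ) : ℤ :=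
  ∑ η : Fin m → Finset (Fin n),
    if (∀ i, (η i).Nonempty) ∧ (∀ i j : Fin m, i ≠ j → Disjoint (η i) (η j))
    then (-1 : ℤ) ^ ((∑ i, (η i).card) - m) else 0


open Classical in
noncomputable def Tsum (m n : ℕ) : ℤ :=
  ∑ g : Fin n → Option (Fin m),
    if (∀ i, ∃ x, g x = some i)
    then ∏ x, (if (g x).isSome then (-1 : ℤ) else 1) else 0

noncomputable def Gmap {m n : ℕ} (η : Fin m → Finset (Fin n)) (x : Fin n) : Option (Fin m) :=
  if h : ∃ i, x ∈ η i then some (Classical.choose h) else none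

noncomputable def Fmap {m n : ℕ} (g : Fin n → Option (Fin m)) (i : Fin m) : Finset (Fin n) :=
  Finset.univ.filter (fun x => g x = some i)

lemma sum_option_ite {m : ℕ} (v : Option (Fin m)) :
    (∑ i : Fin m, if v = some i then (1:ℕ) else 0) = if v.isSome then 1 else 0 := by
  cases v with
  | none => simp
  | some j => simp [eq_comm]

lemma fiber_card {m n : ℕ} (g : Fin n → Option (Fin m)) :
    (∑ i, (Fmap g i).card) = ∑ x : Fin n, if (g x).isSome then 1 else 0 := by
  simp only [Fmap, Finset.card_filter]
  rw [Finset.sum_comm]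
  exact Finset.sum_congr rfl fun x _ => sum_option_ite (g x)

lemma G_some {m n : ℕ} {η : Fin m → Finset (Fin n)}
    (hd : ∀ i j : Fin m, i ≠ j → Disjoint (η i) (η j)) {x : Fin n} {i : Fin m}
    (hx : x ∈ η i) : Gmap η x = some i := by
  have h : ∃ j, x ∈ η j := ⟨i, hx⟩
  rw [Gmap, dif_pos h]
  congr 1
  by_contra hne
  exact (Finset.disjoint_left.mp (hd _ _ hne)) (Classical.choose_spec h) hx

lemma FG {m n : ℕ} {η : Fin m → Finset (Fin n)}
    (hd : ∀ i j : Fin m, i ≠ j → Disjoint (η i) (η j)) : Fmap (Gmap η) = η := by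
  funext i
  ext x
  simp only [Fmap, Finset.mem_filter, Finset.mem_univ, true_and]
  constructor
  · intro h
    by_cases hex : ∃ j, x ∈ η j
    · rw [Gmap, dif_pos hex] at h
      obtain rfl : Classical.choose hex = i := by injection h
      exact Classical.choose_spec hex
    · rw [Gmap, dif_neg hex] at h; exact absurd h (by simp)
  · exact fun hx => G_some hd hx

lemma GF {m n : ℕ} (g : Fin n → Option (Fin m)) : Gmap (Fmap g) = g := by
  funext x
  by_cases hex : ∃ i, x ∈ Fmap g i
  · rw [Gmap, dif_pos hex]
    exact (Finset.mem_filter.mp (Classical.choose_spec hex)).2.symm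
  · rw [Gmap, dif_neg hex]
    cases hgx : g x with
    | none => rfl
    | some j => exact absurd ⟨j, by simp [Fmap, hgx]⟩ hex

lemma neg_one_pow_sub {a m : ℕ} (h : m ≤ a) : (-1 : ℤ) ^ (a - m) = (-1) ^ m * (-1) ^ a := by
  rw [← pow_add]
  have : m + a = (a - m) + 2 * m := by omega
  rw [this, pow_add]
  simp [pow_mul]

open Classical in
lemma step1 (m n : ℕ) : homEulerChar m n = (-1 : ℤ) ^ m * Tsum m n := by
  rw [homEulerChar, Tsum, Finset.mul_sum]
  simp only [mul_ite, mul_zero]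
  rw [← Finset.sum_filter, ← Finset.sum_filter]
  refine Finset.sum_nbij' Gmap Fmap ?_ ?_ ?_ ?_ ?_
  · intro η hη
    rw [Finset.mem_filter] at hη ⊢
    refine ⟨Finset.mem_univ _, fun i => ?_⟩
    obtain ⟨x, hx⟩ := hη.2.1 i
    exact ⟨x, G_some hη.2.2 hx⟩
  · intro g hg
    rw [Finset.mem_filter] at hg ⊢
    refine ⟨Finset.mem_univ _, fun i => ?_, fun i j hij => ?_⟩
    · obtain ⟨x, hx⟩ := hg.2 i
      exact ⟨x, by simp [Fmap, hx]⟩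
    · rw [Finset.disjoint_left]
      intro x hxi hxj
      simp only [Fmap, Finset.mem_filter] at hxi hxj
      rw [hxi.2] at hxj
      exact hij (by injection hxj.2)
  · intro η hη
    rw [Finset.mem_filter] at hη
    exact FG hη.2.2
  · intro g _
    exact GF g
  · intro η hη
    rw [Finset.mem_filter] at hη
    have hm : m ≤ ∑ i, (η i).card := by
      calc m = ∑ _i : Fin m, 1 := by simp
      _ ≤ ∑ i, (η i).card := Finset.sum_le_sum fun i _ => Finset.card_pos.mpr (hη.2.1 i)
    rw [neg_one_pow_sub hm]
    congr 1
    have : ∀ x : Fin n, (if (Gmap η x).isSome then (-1:ℤ) else 1) = (-1) ^ (if (Gmap η x).isSome then 1 else 0) := by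
      intro x; by_cases h : (Gmap η x).isSome <;> simp [h]
    rw [Finset.prod_congr rfl (fun x _ => this x), Finset.prod_pow_eq_pow_sum]
    rw [← fiber_card (Gmap η), FG hη.2.2]


lemma prod_ind {ι : Type*} (s : Finset ι) (p : ι → Prop) [DecidablePred p]
    [Decidable (∀ i ∈ s, p i)] :
    (∏ i ∈ s, if p i then (1:ℤ) else 0) = if ∀ i ∈ s, p i then 1 else 0 := by
  by_cases h : ∀ i ∈ s, p i
  · rw [if_pos h]; exact Finset.prod_eq_one fun i hi => if_pos (h i hi)
  · rw [if_neg h]; push_neg at h; obtain ⟨i, hi, hp⟩ := h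
    exact Finset.prod_eq_zero hi (if_neg hp)

open Classical in
lemma key_avoid (m n : ℕ) (S : Finset (Fin m)) :
    (∑ g : Fin n → Option (Fin m), (∏ x, (if (g x).isSome then (-1:ℤ) else 1)) *
        (if (∀ i ∈ S, ¬ ∃ x, g x = some i) then 1 else 0))
      = ((1:ℤ) - m + S.card)^n := by
  have hcond : ∀ g : Fin n → Option (Fin m),
      ((∀ i ∈ S, ¬ ∃ x, g x = some i) ↔
        ∀ x ∈ (univ : Finset (Fin n)), ∀ i ∈ S, g x ≠ some i) := by
    intro g
    constructor
    · intro h x _ i hi hgx; exact h i hi ⟨x, hgx⟩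
    · rintro h i hi ⟨x, hx⟩; exact h x (mem_univ x) i hi hx
  have husum : (∑ v : Option (Fin m), (if v.isSome then (-1:ℤ) else 1) *
      (if (∀ i ∈ S, v ≠ some i) then 1 else 0)) = (1:ℤ) - m + S.card := by
    rw [Fintype.sum_option]
    have h1 : ∀ i : Fin m, ((if (some i : Option (Fin m)).isSome then (-1:ℤ) else 1) *
        (if (∀ j ∈ S, (some i : Option (Fin m)) ≠ some j) then 1 else 0))
        = (if i ∈ S then (1:ℤ) else 0) - 1 := by
      intro i; by_cases h : i ∈ S <;> simp [h]
    rw [Finset.sum_congr rfl fun i _ => h1 i, Finset.sum_sub_distrib, Finset.sum_boole]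
    simp only [Option.isSome_none, Bool.false_eq_true, if_false]
    have : (univ.filter fun i : Fin m => i ∈ S) = S := by
      ext i; simp
    rw [this]
    simp
    ring
  calc (∑ g : Fin n → Option (Fin m), (∏ x, (if (g x).isSome then (-1:ℤ) else 1)) *
        (if (∀ i ∈ S, ¬ ∃ x, g x = some i) then 1 else 0))
      = ∑ g : Fin n → Option (Fin m), ∏ x,
          ((if (g x).isSome then (-1:ℤ) else 1) * (if (∀ i ∈ S, g x ≠ some i) then 1 else 0)) := by
        refine Finset.sum_congr rfl fun g _ => ?_
        rw [if_congr (hcond g) rfl rfl, ← prod_ind, ← Finset.prod_mul_distrib]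
    _ = ∑ g ∈ Fintype.piFinset (fun _ : Fin n => (univ : Finset (Option (Fin m)))), ∏ x,
          ((if (g x).isSome then (-1:ℤ) else 1) * (if (∀ i ∈ S, g x ≠ some i) then 1 else 0)) := by
        rw [Fintype.piFinset_univ]
    _ = ∏ _x : Fin n, ∑ v : Option (Fin m),
          ((if v.isSome then (-1:ℤ) else 1) * (if (∀ i ∈ S, v ≠ some i) then 1 else 0)) := by
        rw [Finset.prod_univ_sum]
    _ = ((1:ℤ) - m + S.card)^n := by
        rw [Finset.prod_congr rfl fun x _ => husum, Finset.prod_const]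
        simp

open Classical in
lemma step2 (m n : ℕ) :
    Tsum m n = ∑ S ∈ (Finset.univ : Finset (Fin m)).powerset,
      (-1:ℤ)^S.card * ((1:ℤ) - m + S.card)^n := by
  calc Tsum m n
      = ∑ g : Fin n → Option (Fin m), (∏ x, (if (g x).isSome then (-1:ℤ) else 1)) *
          (if (∀ i ∈ (univ : Finset (Fin m)), ∃ x, g x = some i) then 1 else 0) := by
        rw [Tsum]
        refine Finset.sum_congr rfl fun g _ => ?_
        by_cases h : ∀ i, ∃ x, g x = some i
        · rw [if_pos h, if_pos (fun i _ => h i), mul_one]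
        · rw [if_neg h, if_neg (fun h' => h fun i => h' i (mem_univ i)), mul_zero]
    _ = ∑ g : Fin n → Option (Fin m), (∏ x, (if (g x).isSome then (-1:ℤ) else 1)) *
          ∏ i : Fin m, ((-(if ¬ ∃ x, g x = some i then (1:ℤ) else 0)) + 1) := by
        refine Finset.sum_congr rfl fun g _ => ?_
        rw [← prod_ind]
        congr 1
        refine Finset.prod_congr rfl fun i _ => ?_
        by_cases h : ∃ x, g x = some i <;> simp [h]
    _ = ∑ g : Fin n → Option (Fin m), (∏ x, (if (g x).isSome then (-1:ℤ) else 1)) *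
          ∑ S ∈ (univ : Finset (Fin m)).powerset,
            ((-1:ℤ)^S.card * (if (∀ i ∈ S, ¬ ∃ x, g x = some i) then 1 else 0)) := by
        refine Finset.sum_congr rfl fun g _ => ?_
        rw [Finset.prod_add]
        congr 1
        refine Finset.sum_congr rfl fun S _ => ?_
        rw [Finset.prod_const_one, mul_one]
        calc (∏ i ∈ S, (-(if ¬ ∃ x, g x = some i then (1:ℤ) else 0)))
            = ∏ i ∈ S, ((-1:ℤ) * (if ¬ ∃ x, g x = some i then (1:ℤ) else 0)) := by
              refine Finset.prod_congr rfl fun i _ => by ring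
          _ = (-1:ℤ)^S.card * (if (∀ i ∈ S, ¬ ∃ x, g x = some i) then 1 else 0) := by
              rw [Finset.prod_mul_distrib, Finset.prod_const, prod_ind]
    _ = ∑ g : Fin n → Option (Fin m), ∑ S ∈ (univ : Finset (Fin m)).powerset,
          (∏ x, (if (g x).isSome then (-1:ℤ) else 1)) *
            ((-1:ℤ)^S.card * (if (∀ i ∈ S, ¬ ∃ x, g x = some i) then 1 else 0)) := by
        exact Finset.sum_congr rfl fun g _ => Finset.mul_sum _ _ _
    _ = ∑ S ∈ (univ : Finset (Fin m)).powerset, ∑ g : Fin n → Option (Fin m),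
          (∏ x, (if (g x).isSome then (-1:ℤ) else 1)) *
            ((-1:ℤ)^S.card * (if (∀ i ∈ S, ¬ ∃ x, g x = some i) then 1 else 0)) := by
        exact Finset.sum_comm
    _ = ∑ S ∈ (univ : Finset (Fin m)).powerset, (-1:ℤ)^S.card *
          ∑ g : Fin n → Option (Fin m), (∏ x, (if (g x).isSome then (-1:ℤ) else 1)) *
            (if (∀ i ∈ S, ¬ ∃ x, g x = some i) then 1 else 0) := by
        refine Finset.sum_congr rfl fun S _ => ?_
        rw [Finset.mul_sum]
        exact Finset.sum_congr rfl fun g _ => by ring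
    _ = ∑ S ∈ (univ : Finset (Fin m)).powerset, (-1:ℤ)^S.card * ((1:ℤ) - m + S.card)^n := by
        exact Finset.sum_congr rfl fun S _ => by rw [key_avoid]

lemma closedForm (m n : ℕ) :
    homEulerChar m n = ∑ j ∈ range (m+1), (-1:ℤ)^j * (m.choose j : ℤ) * ((1:ℤ) - j)^n := by
  rw [step1, step2, Finset.sum_powerset, Finset.mul_sum]
  rw [← Finset.sum_range_reflect (fun j => (-1:ℤ)^j * (m.choose j : ℤ) * ((1:ℤ) - j)^n) (m+1)]
  have hcard : #(univ : Finset (Fin m)) = m := by simp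
  rw [hcard]
  refine Finset.sum_congr rfl fun k hk => ?_
  have hk' : k ≤ m := Nat.lt_succ_iff.mp (Finset.mem_range.mp hk)
  have hin : ∀ S ∈ powersetCard k (univ : Finset (Fin m)),
      (-1:ℤ)^S.card * ((1:ℤ) - m + S.card)^n = (-1:ℤ)^k * ((1:ℤ) - m + k)^n := by
    intro S hS
    rw [(Finset.mem_powersetCard.mp hS).2]
  rw [Finset.sum_congr rfl hin, Finset.sum_const, Finset.card_powersetCard, hcard]
  have h1 : m + 1 - 1 - k = m - k := by omega
  rw [h1, Nat.choose_symm hk', neg_one_pow_sub hk']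
  have h2 : ((1:ℤ) - ↑(m - k)) = 1 - ↑m + ↑k := by
    push_cast [Nat.cast_sub hk']; ring
  rw [h2]
  push_cast
  ring

lemma cf_rec (m n : ℕ) :
    (∑ j ∈ range (m+2), (-1:ℤ)^j * ((m+1).choose j : ℤ) * ((1:ℤ) - j)^(n+1))
    = ((m:ℤ)+1) * (∑ j ∈ range (m+1), (-1:ℤ)^j * (m.choose j : ℤ) * ((1:ℤ) - j)^n)
      - (m:ℤ) * (∑ j ∈ range (m+2), (-1:ℤ)^j * ((m+1).choose j : ℤ) * ((1:ℤ) - j)^n) := by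
  have ext1 : (∑ j ∈ range (m+1), (-1:ℤ)^j * (m.choose j : ℤ) * ((1:ℤ) - j)^n)
      = ∑ j ∈ range (m+2), (-1:ℤ)^j * (m.choose j : ℤ) * ((1:ℤ) - j)^n := by
    rw [Finset.sum_range_succ (n := m+1)]
    simp
  rw [ext1, Finset.mul_sum, Finset.mul_sum, ← Finset.sum_sub_distrib]
  refine Finset.sum_congr rfl fun j hj => ?_
  have hj' : j ≤ m + 1 := Nat.lt_succ_iff.mp (Finset.mem_range.mp hj)
  have hc : ((m:ℤ)+1) * (m.choose j : ℤ) = ((m+1).choose j : ℤ) * ((m:ℤ) + 1 - j) := by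
    have h := congrArg (Nat.cast : ℕ → ℤ) (Nat.choose_mul_succ_eq m j)
    push_cast [Nat.cast_sub hj'] at h
    linarith
  have hpow : ((1:ℤ) - (j:ℤ))^(n+1) = ((1:ℤ)-(j:ℤ)) * ((1:ℤ)-(j:ℤ))^n := by ring
  rw [hpow]
  linear_combination (-((-1:ℤ)^j * ((1:ℤ)-(j:ℤ))^n)) * hc

/-- for `n > m ≥ 2`,
`χ(m,n) = m·χ(m−1, n−1) − (m−1)·χ(m, n−1)`. -/
theorem homEulerChar_recurrence (m n : ℕ) (hm : 2 ≤ m) (hmn : m < n) :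
    homEulerChar m n =
      (m : ℤ) * homEulerChar (m - 1) (n - 1)
        - ((m : ℤ) - 1) * homEulerChar m (n - 1) := by
  obtain ⟨a, rfl⟩ : ∃ a, m = a + 2 := ⟨m - 2, by omega⟩
  obtain ⟨b, rfl⟩ : ∃ b, n = b + 1 := ⟨n - 1, by omega⟩
  have h1 : a + 2 - 1 = a + 1 := by omega
  have h2 : b + 1 - 1 = b := by omega
  rw [h1, h2, closedForm, closedForm, closedForm]
  have := cf_rec (a+1) b
  push_cast at this ⊢
  convert this using 2 <;> push_cast <;> ring_nf
end

section
/- Define f(m,n) = (−1)^{n−m}·(χ(m,n) − 1) for integers n ≥ m ≥ 1 (this is the number of spheres in the wedge decomposition of Hom(K_m,K_n)). Then for all integers n > m ≥ 2, f satisfies the recurrence f(m,n) = m·f(m−1, n−1) + (m−1)·f(m, n−1). -/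
/-- `f(m,n) = (−1)^{n−m}·(χ(m,n) − 1)`, the number of spheres in the wedge
decomposition of `Hom(K_m, K_n)`. -/
noncomputable def sphereCount (m n : ℕ) : ℤ :=
  (-1 : ℤ) ^ (n - m) * (homEulerChar m n - 1)

open Finset Classical

noncomputable def wgt {m : ℕ} (v : Option (Fin m)) : ℤ := if v.isSome then -1 else 1

noncomputable def toG {m n : ℕ} (η : Fin m → Finset (Fin n)) : Fin n → Option (Fin m) :=
  fun x => if h : ∃ i, x ∈ η i then some h.choose else none

noncomputable def toEta {m n : ℕ} (g : Fin n → Option (Fin m)) : Fin m → Finset (Fin n) :=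
  fun i => univ.filter (fun x => g x = some i)

lemma toG_eq_some {m n : ℕ} {η : Fin m → Finset (Fin n)}
    (hd : ∀ i j : Fin m, i ≠ j → Disjoint (η i) (η j)) {x : Fin n} {i : Fin m}
    (hx : x ∈ η i) : toG η x = some i := by
  have h : ∃ i, x ∈ η i := ⟨i, hx⟩
  rw [toG, dif_pos h]
  congr 1
  by_contra hne
  exact (Finset.disjoint_left.mp (hd _ _ hne) h.choose_spec) hx

lemma step1_s3 (m n : ℕ) :
    homEulerChar m n =
      ∑ g : Fin n → Option (Fin m),
        (if ∀ i, ∃ x, g x = some i then ((-1:ℤ)^m * ∏ x, wgt (g x)) else 0) := by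
  rw [homEulerChar, ← Finset.sum_filter, ← Finset.sum_filter]
  refine Finset.sum_nbij' toG toEta ?_ ?_ ?_ ?_ ?_
  · rintro η hη
    simp only [mem_filter, mem_univ, true_and] at hη ⊢
    intro i
    obtain ⟨x, hx⟩ := hη.1 i
    exact ⟨x, toG_eq_some hη.2 hx⟩
  · rintro g hg
    simp only [mem_filter, mem_univ, true_and] at hg ⊢
    constructor
    · intro i
      obtain ⟨x, hx⟩ := hg i
      exact ⟨x, by simp [toEta, hx]⟩
    · intro i j hij
      rw [Finset.disjoint_left]
      intro x hxi hxj
      simp only [toEta, mem_filter] at hxi hxj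
      exact hij (by rw [← Option.some_inj, ← hxi.2, hxj.2])
  · rintro η hη
    simp only [mem_filter, mem_univ, true_and] at hη
    funext i
    ext x
    simp only [toEta, mem_filter, mem_univ, true_and]
    constructor
    · intro hx
      rw [toG] at hx
      split at hx
      · next h => obtain ⟨rfl⟩ := Option.some_inj.mp hx; exact h.choose_spec
      · exact absurd hx (by simp)
    · intro hx; exact toG_eq_some hη.2 hx
  · rintro g hg
    funext x
    rcases hgx : g x with _ | i
    · rw [toG, dif_neg]
      rintro ⟨i, hi⟩
      simp only [toEta, mem_filter] at hi
      rw [hgx] at hi; exact absurd hi.2 (by simp)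
    · have h : ∃ i', x ∈ toEta g i' := ⟨i, by simp [toEta, hgx]⟩
      rw [toG, dif_pos h]
      exact ((Finset.mem_filter.mp h.choose_spec).2).symm.trans hgx
  · rintro η hη
    simp only [mem_filter, mem_univ, true_and] at hη
    have hsupp : univ.filter (fun x => (toG η x).isSome) = univ.biUnion η := by
      ext x
      simp only [mem_filter, mem_univ, true_and, mem_biUnion]
      rw [toG]
      split
      · next h => simpa using ⟨h.choose, h.choose_spec⟩
      · next h => simpa using fun i hi => h ⟨i, hi⟩
    have hprod : (∏ x, wgt (toG η x)) = (-1:ℤ) ^ (∑ i, (η i).card) := by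
      rw [show (∑ i, (η i).card) = #(univ.filter (fun x => (toG η x).isSome)) by
        rw [hsupp, Finset.card_biUnion (fun i _ j _ hij => hη.2 i j hij)]]
      simp only [wgt]
      rw [Finset.prod_ite (fun _ => (-1:ℤ)) (fun _ => (1:ℤ)), Finset.prod_const,
        Finset.prod_const, one_pow, mul_one]
    have hge : m ≤ ∑ i, (η i).card := by
      calc m = ∑ _i : Fin m, 1 := by simp
      _ ≤ ∑ i, (η i).card := Finset.sum_le_sum (fun i _ => Finset.card_pos.mpr (hη.1 i))
    obtain ⟨k, hk⟩ : ∃ k, ∑ i, (η i).card = m + k := ⟨_, (by omega : ∑ i, (η i).card = m + (∑ i, (η i).card - m))⟩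
    have h2 : ((-1:ℤ)^m) * (-1)^m = 1 := by
      rw [← pow_add]; exact Even.neg_one_pow ⟨m, rfl⟩
    rw [hprod, hk, Nat.add_sub_cancel_left, pow_add, ← mul_assoc, h2, one_mul]

def Hc (m n : ℕ) : ℤ :=
  ∑ j ∈ Finset.range (m+1), (-1:ℤ)^j * (m.choose j) * ((j:ℤ)+1-m)^n

lemma sum_prod_fn {V : Type*} [Fintype V] (n : ℕ) (F : V → ℤ) :
    ∑ g : Fin n → V, ∏ x, F (g x) = (∑ v, F v)^n := by
  calc ∑ g : Fin n → V, ∏ x, F (g x)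
      = ∑ g ∈ Fintype.piFinset (fun _ : Fin n => univ), ∏ x, F (g x) := by
        rw [Fintype.piFinset_univ]
    _ = ∏ _x : Fin n, ∑ v, F v := (Finset.prod_univ_sum _ _).symm
    _ = (∑ v, F v)^n := by rw [Finset.prod_const, Finset.card_univ, Fintype.card_fin]

lemma innerSumS (m n : ℕ) (S : Finset (Fin m)) :
    ∑ g : Fin n → Option (Fin m),
        ((∏ x, wgt (g x)) * if ∀ i ∈ S, ¬∃ x, g x = some i then (1:ℤ) else 0)
      = ((#S : ℤ) + 1 - m)^n := by
  have key := sum_prod_fn (V := Option (Fin m)) n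
    (fun v => wgt v * if ∀ i ∈ S, v ≠ some i then (1:ℤ) else 0)
  have hrw : ∀ g : Fin n → Option (Fin m),
      ((∏ x, wgt (g x)) * if ∀ i ∈ S, ¬∃ x, g x = some i then (1:ℤ) else 0)
      = ∏ x, (fun v => wgt v * if ∀ i ∈ S, v ≠ some i then (1:ℤ) else 0) (g x) := by
    intro g
    simp only
    by_cases h : ∀ i ∈ S, ¬∃ x, g x = some i
    · rw [if_pos h, mul_one]
      exact Finset.prod_congr rfl fun x _ => by
        rw [if_pos (fun i hi heq => h i hi ⟨x, heq⟩), mul_one]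
    · rw [if_neg h, mul_zero]
      push_neg at h
      obtain ⟨i, hi, x, heq⟩ := h
      exact (Finset.prod_eq_zero (mem_univ x) (by
        rw [if_neg (fun hc => hc i hi heq), mul_zero])).symm
  rw [Finset.sum_congr rfl (fun g _ => hrw g), key]
  congr 1
  rw [Fintype.sum_option]
  have hnone : wgt (none : Option (Fin m)) *
      (if ∀ i ∈ S, (none : Option (Fin m)) ≠ some i then (1:ℤ) else 0) = 1 := by
    rw [if_pos (fun i _ => by simp)]
    simp [wgt]
  have hsome : ∀ a : Fin m,
      wgt (some a) * (if ∀ i ∈ S, (some a : Option (Fin m)) ≠ some i then (1:ℤ) else 0)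
      = -(if a ∉ S then (1:ℤ) else 0) := by
    intro a
    have hiff : (∀ i ∈ S, (some a : Option (Fin m)) ≠ some i) ↔ a ∉ S := by
      simp only [ne_eq, Option.some_inj]
      constructor
      · intro h ha; exact h a ha rfl
      · rintro h i hi rfl; exact h hi
    rw [if_congr hiff rfl rfl]
    by_cases ha : a ∈ S <;> simp [wgt, ha]
  rw [hnone, Finset.sum_congr rfl (fun a _ => hsome a), Finset.sum_neg_distrib,
    Finset.sum_boole]
  have hfc : (univ.filter (fun a => a ∉ S)) = Sᶜ := by ext a; simp
  have hle : #S ≤ m := by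
    simpa using Finset.card_le_univ S
  rw [hfc, Finset.card_compl, Fintype.card_fin, Nat.cast_sub hle]
  ring

lemma homEulerChar_eq (m n : ℕ) : homEulerChar m n = (-1:ℤ)^m * Hc m n := by
  rw [step1_s3]
  have hA : ∀ g : Fin n → Option (Fin m),
      (if ∀ i, ∃ x, g x = some i then ((-1:ℤ)^m * ∏ x, wgt (g x)) else 0)
      = ∑ S ∈ (univ : Finset (Fin m)).powerset,
          (-1:ℤ)^(#S) * ((-1:ℤ)^m *
            ((∏ x, wgt (g x)) * if ∀ i ∈ S, ¬∃ x, g x = some i then (1:ℤ) else 0)) := by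
    intro g
    have h1 : (if ∀ i, ∃ x, g x = some i then ((-1:ℤ)^m * ∏ x, wgt (g x)) else 0)
        = ((-1:ℤ)^m * ∏ x, wgt (g x)) *
            ∏ i : Fin m, (if ∃ x, g x = some i then (1:ℤ) else 0) := by
      rw [Finset.prod_boole]
      by_cases h : ∀ i, ∃ x, g x = some i
      · rw [if_pos h, if_pos (fun i _ => h i), mul_one]
      · rw [if_neg h, if_neg (fun h' => h (fun i => h' i (mem_univ i))), mul_zero]
    rw [h1]
    have h2 : ∀ i : Fin m, (if ∃ x, g x = some i then (1:ℤ) else 0)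
        = (-(if ¬ ∃ x, g x = some i then (1:ℤ) else 0)) + 1 := by
      intro i; by_cases h : ∃ x, g x = some i <;> simp [h]
    rw [Finset.prod_congr rfl (fun i _ => h2 i), Finset.prod_add, Finset.mul_sum]
    refine Finset.sum_congr rfl fun S hS => ?_
    rw [Finset.prod_const_one, mul_one]
    have h3 : ∏ i ∈ S, (-(if ¬∃ x, g x = some i then (1:ℤ) else 0))
        = (-1:ℤ)^(#S) * ∏ i ∈ S, (if ¬∃ x, g x = some i then (1:ℤ) else 0) := by
      calc ∏ i ∈ S, (-(if ¬∃ x, g x = some i then (1:ℤ) else 0))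
          = ∏ i ∈ S, ((-1) * (if ¬∃ x, g x = some i then (1:ℤ) else 0)) := by
            refine Finset.prod_congr rfl fun i _ => by ring
        _ = (∏ _i ∈ S, (-1:ℤ)) * ∏ i ∈ S, (if ¬∃ x, g x = some i then (1:ℤ) else 0) :=
            Finset.prod_mul_distrib
        _ = _ := by rw [Finset.prod_const]
    rw [h3, Finset.prod_boole]
    ring
  rw [Finset.sum_congr rfl (fun g _ => hA g), Finset.sum_comm]
  have : ∀ S ∈ (univ : Finset (Fin m)).powerset,
      ∑ g : Fin n → Option (Fin m),
        (-1:ℤ)^(#S) * ((-1:ℤ)^m *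
          ((∏ x, wgt (g x)) * if ∀ i ∈ S, ¬∃ x, g x = some i then (1:ℤ) else 0))
      = (-1:ℤ)^m * ((-1:ℤ)^(#S) * ((#S : ℤ) + 1 - m)^n) := by
    intro S _
    rw [← Finset.mul_sum, ← Finset.mul_sum, innerSumS]
    ring
  rw [Finset.sum_congr rfl this, ← Finset.mul_sum]
  congr 1
  rw [Finset.sum_powerset]
  rw [Hc, Finset.card_univ, Fintype.card_fin]
  refine Finset.sum_congr rfl fun j hj => ?_
  have : ∀ S ∈ Finset.powersetCard j (univ : Finset (Fin m)),
      (-1:ℤ)^(#S) * ((#S : ℤ) + 1 - m)^n = (-1:ℤ)^j * ((j : ℤ) + 1 - m)^n := by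
    intro S hS
    rw [(Finset.mem_powersetCard.mp hS).2]
  rw [Finset.sum_congr rfl this, Finset.sum_const, Finset.card_powersetCard,
    Finset.card_univ, Fintype.card_fin, nsmul_eq_mul]
  ring

lemma Hc_rec (M N : ℕ) :
    Hc (M+1) (N+1) + (M:ℤ) * Hc (M+1) N + ((M:ℤ)+1) * Hc M N = 0 := by
  have h1 : Hc (M+1) (N+1) + (M:ℤ) * Hc (M+1) N
      = ∑ j ∈ Finset.range (M+1+1),
          (-1:ℤ)^j * (((M+1).choose j : ℕ):ℤ) * (j:ℤ) * ((j:ℤ)+1-((M:ℤ)+1))^N := by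
    rw [Hc, Hc, Finset.mul_sum, ← Finset.sum_add_distrib]
    refine Finset.sum_congr rfl fun j _ => ?_
    rw [pow_succ]
    push_cast
    ring
  have hM : ((M:ℤ)+1) * Hc M N
      = ∑ j ∈ Finset.range (M+1),
          ((M:ℤ)+1) * ((-1:ℤ)^j * ((M.choose j : ℕ):ℤ) * ((j:ℤ)+1-(M:ℤ))^N) := by
    rw [Hc, Finset.mul_sum]
  rw [h1, Finset.sum_range_succ', hM]
  have hzero : (-1:ℤ)^0 * (((M+1).choose 0 : ℕ):ℤ) * ((0:ℕ):ℤ) * (((0:ℕ):ℤ)+1-((M:ℤ)+1))^N = 0 := by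
    push_cast; ring
  rw [hzero, add_zero, ← Finset.sum_add_distrib]
  refine Finset.sum_eq_zero fun j hj => ?_
  have hc : ((M:ℤ)+1) * (M.choose j : ℤ) = ((M+1).choose (j+1) : ℤ) * ((j:ℤ)+1) := by
    exact_mod_cast congrArg (Nat.cast (R := ℤ)) (Nat.add_one_mul_choose_eq M j)
  have hbase : (((j+1:ℕ)):ℤ)+1-((M:ℤ)+1) = (j:ℤ)+1-(M:ℤ) := by push_cast; ring
  rw [hbase, pow_succ]
  push_cast
  linear_combination ((-1:ℤ)^j * ((j:ℤ)+1-(M:ℤ))^N) * hc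

/-- for `n > m ≥ 2`,
`f(m,n) = m·f(m−1, n−1) + (m−1)·f(m, n−1)`. -/
theorem sphereCount_recurrence (m n : ℕ) (hm : 2 ≤ m) (hmn : m < n) :
    sphereCount m n =
      (m : ℤ) * sphereCount (m - 1) (n - 1)
        + ((m : ℤ) - 1) * sphereCount m (n - 1) := by
  obtain ⟨M, rfl⟩ : ∃ M, m = M + 1 := ⟨m - 1, by omega⟩
  obtain ⟨N, rfl⟩ : ∃ N, n = N + 1 := ⟨n - 1, by omega⟩
  simp only [Nat.add_sub_cancel]
  have hcore := Hc_rec M N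
  have e1 : N + 1 - (M + 1) = (N - (M + 1)) + 1 := by omega
  have e2 : N - M = (N - (M + 1)) + 1 := by omega
  rw [sphereCount, sphereCount, sphereCount, homEulerChar_eq, homEulerChar_eq,
    homEulerChar_eq, e1, e2]
  set K := N - (M + 1)
  set p := (-1:ℤ)^M with hp
  set e := (-1:ℤ)^K with he
  simp only [pow_succ]
  push_cast
  linear_combination (e * p) * hcore
end

section
/- For every integer n ≥ 1, Σ_{k=1}^{n−1} (−1)^{n+k+1} · binom(n, k+1) · k^n = n! − 1. (This is the boundary value f(n,n) = n! − 1 of the sphere-counting function for Hom(K_n,K_n).) -/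
open Finset fwdDiff

private lemma fwdDiff_pow' (j : ℕ) :
    Δ_[(1:ℤ)] (fun x : ℤ => x ^ j) = fun x : ℤ => ∑ i ∈ range j, (j.choose i : ℤ) * x ^ i := by
  funext x
  simp only [fwdDiff]
  rw [add_pow]
  rw [Finset.sum_range_succ]
  simp [mul_comm]

private lemma pow_as_sum (j : ℕ) :
    (fun x : ℤ => ∑ i ∈ range j, (j.choose i : ℤ) * x ^ i)
      = ∑ i ∈ range j, (j.choose i : ℤ) • (fun x : ℤ => x ^ i) := by
  funext x
  simp [Finset.sum_apply]

private lemma fd_zero : ∀ n j, j < n → (Δ_[(1:ℤ)])^[n] (fun x : ℤ => x ^ j) = fun _ => 0 := by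
  intro n
  induction n with
  | zero => intro j hj; omega
  | succ n IH =>
    intro j hj
    rw [Function.iterate_succ_apply, fwdDiff_pow', pow_as_sum, fwdDiff_iter_finset_sum]
    funext x
    rw [Finset.sum_apply]
    apply Finset.sum_eq_zero
    intro i hi
    rw [fwdDiff_iter_const_smul, IH i (by simp at hi; omega)]
    simp

private lemma fd_diag : ∀ n, (Δ_[(1:ℤ)])^[n] (fun x : ℤ => x ^ n) = fun _ => (n.factorial : ℤ) := by
  intro n
  induction n with
  | zero => funext x; simp
  | succ n IH =>
    rw [Function.iterate_succ_apply, fwdDiff_pow', pow_as_sum, fwdDiff_iter_finset_sum,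
      Finset.sum_range_succ]
    funext x
    rw [Pi.add_apply, Finset.sum_apply, Finset.sum_eq_zero (fun i hi => by
      rw [fwdDiff_iter_const_smul, fd_zero n i (by simpa using hi)]; simp)]
    rw [fwdDiff_iter_const_smul, Pi.smul_apply, IH]
    rw [Nat.choose_succ_self_right]
    simp [Nat.factorial_succ]

/-- for every `n ≥ 1`,
`Σ_{k=1}^{n−1} (−1)^{n+k+1} · C(n, k+1) · k^n = n! − 1`
(the boundary value `f(n,n) = n! − 1` of the sphere-counting function for
`Hom(K_n, K_n)`). -/
theorem sphereCount_diagonal (n : ℕ) (hn : 1 ≤ n) :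
    ∑ k ∈ Finset.Icc 1 (n - 1),
        (-1 : ℤ) ^ (n + k + 1) * (n.choose (k + 1) : ℤ) * (k : ℤ) ^ n
      = (n.factorial : ℤ) - 1 := by
  have key := fwdDiff_iter_eq_sum_shift (1:ℤ) (fun x : ℤ => x ^ n) n (-1)
  rw [fd_diag n] at key
  simp only [smul_eq_mul, nsmul_eq_mul, mul_one, zsmul_eq_mul, Int.cast_natCast] at key
  -- key : n ! = ∑ k in range (n+1), (-1)^(n-k) * C(n,k) * (-1 + k)^n
  rw [Finset.sum_range_succ'] at key
  -- last summand: k = 0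
  have h0 : ((-1 : ℤ) ^ (n - 0) * (n.choose 0 : ℤ)) * ((-1 : ℤ) + ((0:ℕ) : ℤ)) ^ n = 1 := by
    simp [← pow_add]
  rw [h0] at key
  have hsum : ∑ i ∈ range n,
      ((-1 : ℤ) ^ (n - (i + 1)) * (n.choose (i + 1) : ℤ)) * ((-1 : ℤ) + ((i + 1 : ℕ) : ℤ)) ^ n
      = ∑ k ∈ Finset.Icc 1 (n - 1),
        (-1 : ℤ) ^ (n + k + 1) * (n.choose (k + 1) : ℤ) * (k : ℤ) ^ n := by
    rw [Finset.sum_subset (by intro m hm; simp at hm ⊢; omega :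
        Finset.Icc 1 (n-1) ⊆ range n)]
    · apply Finset.sum_congr rfl
      intro i hi
      simp only [Finset.mem_range] at hi
      have he : n + i + 1 = (n - (i + 1)) + 2 * (i + 1) := by omega
      rw [he, pow_add, pow_mul]
      push_cast
      ring_nf
    · intro m hm hm'
      have : m = 0 := by simp at hm hm'; omega
      subst this
      simp [zero_pow (by omega : n ≠ 0)]
  rw [hsum] at key
  omega
end

section
/- For all integers n ≥ m ≥ 1, one has (m−1)!·f(m,n) = (−1)^{m+n+1}·(m−1)! + m!·(−1)^n · Σ_{k=m}^{n} (−1)^k · Surj(k−1, m−1), where Surj(a,b) denotes the number of surjective functions from a set with a elements onto a set with b elements. (Equivalently, f(m,n) = (−1)^{m+n+1} + m!·(−1)^n Σ_{k=m}^{n} (−1)^k S(k−1, m−1), with S the Stirling numbers of the second kind, since (m−1)!·S(k−1,m−1) = Surj(k−1,m−1).) -/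
open Classical in
/-- `Surj a b` is the number of surjective functions from a set with `a` elements
onto a set with `b` elements. -/
noncomputable def Surj (a b : ℕ) : ℕ :=
  Fintype.card {g : Fin a → Fin b // Function.Surjective g}

/-!
A family `η` of pairwise disjoint subsets of `Fin n` indexed by `Fin m` is the same thing as a
partial map `g : Fin n → Option (Fin m)` (read off from its fibres), and `(-1) ^ ∑ i, #(η i)` is
a product of signs over the points of `Fin n`. Inclusion–exclusion over the values that `g`
misses turns `χ(m,n)` into `(-1)^(m+n) Δ^m (x ↦ x^n) (-1)`, and the same computation gives
`Surj a b = Δ^b (x ↦ x^a) 0`. Since `(x-1)^(n+1) + (x-1)^n = x (x-1)^n` and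
`Δ^(m+1) (x ↦ x f(x-1)) 0 = (m+1) Δ^m f 0`, the numbers `D n = Δ^(m+1) (x ↦ x^n) (-1)` satisfy
`D (n+1) + D n = (m+1) Surj n m`, starting from `D (m+1) = (m+1)!`; unwinding this recurrence
gives the formula.
-/

open Finset Function fwdDiff

theorem neg_one_pow_tsub {R : Type*} [Monoid R] [HasDistribNeg R] {m n : ℕ} (h : m ≤ n) :
    (-1 : R) ^ (n - m) = (-1) ^ (n + m) := by
  rw [show n + m = n - m + 2 * m by omega, pow_add, pow_mul, neg_one_sq, one_pow, mul_one]

theorem fwdDiff_iter_eq_sum_neg_one_pow_card_smul {G : Type*} [AddCommGroup G] (f : ℤ → G)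
    (m : ℕ) (y : ℤ) :
    (Δ_[1])^[m] f y = ∑ U : Finset (Fin m), (-1 : ℤ) ^ #U • f (y + #Uᶜ) := by
  rw [← Equiv.sum_comp (compl_involutive.toPerm _), fwdDiff_iter_eq_sum_shift]
  simp only [Involutive.coe_toPerm, compl_compl, card_compl, Fintype.card_fin]
  rw [← powerset_univ, sum_powerset_apply_card (fun k ↦ (-1 : ℤ) ^ (m - k) • f (y + k)),
    card_univ, Fintype.card_fin]
  refine sum_congr rfl fun k _ ↦ ?_
  rw [mul_comm, mul_smul, natCast_zsmul, nsmul_eq_mul, mul_one]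

theorem sum_ite_subset_neg_one_pow_card {ι : Type*} [Fintype ι] [DecidableEq ι] (s : Finset ι) :
    ∑ U : Finset ι, (if U ⊆ s then (-1 : ℤ) ^ #U else 0) = if s = ∅ then 1 else 0 := by
  rw [← sum_filter, ← sum_powerset_neg_one_pow_card]
  congr 1
  ext U
  simp

theorem sum_ite_forall_mem_prod {α β R : Type*} [Fintype α] [DecidableEq α] [Fintype β]
    [DecidableEq β] [CommSemiring R] (t : Finset β) (w : β → R) :
    ∑ g : α → β, (if ∀ x, g x ∈ t then ∏ x, w (g x) else 0) = (∑ b ∈ t, w b) ^ Fintype.card α := by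
  rw [← sum_filter, ← card_univ, ← prod_const, prod_univ_sum]
  congr 1
  ext g
  simp

theorem inclusion_exclusion_sum_prod_of_covering {α β ι R : Type*} [Fintype α] [DecidableEq α]
    [Fintype β] [DecidableEq β] [Fintype ι] [DecidableEq ι] [CommRing R] (e : ι ↪ β) (w : β → R) :
    ∑ g : α → β, (if ∀ i, ∃ x, g x = e i then ∏ x, w (g x) else 0) =
      ∑ U : Finset ι, (-1 : ℤ) ^ #U • (∑ b ∈ (U.map e)ᶜ, w b) ^ Fintype.card α := by
  have hcover (g : α → β) : (if ∀ i, ∃ x, g x = e i then ∏ x, w (g x) else 0) =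
      ∑ U : Finset ι, if ∀ x, g x ∈ (U.map e)ᶜ then (-1 : ℤ) ^ #U • ∏ x, w (g x) else 0 := by
    have hmissed (U : Finset ι) :
        (∀ x, g x ∈ (U.map e)ᶜ) ↔ U ⊆ ({i | ∀ x, g x ≠ e i} : Finset ι) := by
      simp only [mem_compl, mem_map, subset_iff, mem_filter, mem_univ, true_and]
      grind
    simp_rw [hmissed, ← ite_zero_smul, ← sum_smul, sum_ite_subset_neg_one_pow_card]
    have hnone_missed : ({i | ∀ x, g x ≠ e i} : Finset ι) = ∅ ↔ ∀ i, ∃ x, g x = e i := by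
      simp [filter_eq_empty_iff]
    simp [hnone_missed]
  simp_rw [hcover]
  rw [sum_comm]
  refine sum_congr rfl fun U _ ↦ ?_
  rw [← sum_ite_forall_mem_prod, smul_sum]
  refine sum_congr rfl fun g _ ↦ ?_
  rw [smul_ite, smul_zero]

theorem cast_surj_eq_fwdDiff_iter (a b : ℕ) :
    (Surj a b : ℤ) = (Δ_[1])^[b] (fun x : ℤ ↦ x ^ a) 0 := by
  have h := inclusion_exclusion_sum_prod_of_covering (α := Fin a) (Embedding.refl (Fin b))
    fun _ ↦ (1 : ℤ)
  simp only [prod_const_one, map_refl, sum_const, Fintype.card_fin, Embedding.refl_apply,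
    nsmul_eq_mul, mul_one] at h
  rw [fwdDiff_iter_eq_sum_neg_one_pow_card_smul, Surj, Fintype.card_subtype, ← sum_boole]
  simp only [zero_add, ← h]
  exact sum_congr rfl fun g _ ↦ if_congr Iff.rfl rfl rfl

section someFibers

variable {α β : Type*} [Fintype α] [DecidableEq β]

def someFibers (g : α → Option β) (b : β) : Finset α := {x | g x = some b}

theorem someFibers_injective : Injective (someFibers : (α → Option β) → β → Finset α) := by
  intro g g' h
  funext x
  refine Option.ext fun b ↦ ?_
  simpa [someFibers] using congr(x ∈ $(congrFun h b))

theorem range_someFibers :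
    Set.range (someFibers : (α → Option β) → β → Finset α) =
      {η | ∀ i j, i ≠ j → Disjoint (η i) (η j)} := by
  ext η
  constructor
  · rintro ⟨g, rfl⟩ i j hij
    simp only [someFibers, disjoint_left, mem_filter, mem_univ, true_and]
    intro x hi hj
    exact hij (Option.some_injective _ (hi.symm.trans hj))
  · intro hη
    classical
    refine ⟨fun x ↦ if h : ∃ i, x ∈ η i then some h.choose else none, funext fun i ↦ ?_⟩
    ext x
    simp only [someFibers, mem_filter, mem_univ, true_and]
    split_ifs with h
    · simp only [Option.some.injEq]
      exact ⟨fun hi ↦ hi ▸ h.choose_spec, fun hx ↦ by_contra fun hne ↦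
        disjoint_left.1 (hη _ _ hne) h.choose_spec hx⟩
    · simpa using fun hx ↦ h ⟨i, hx⟩

theorem prod_option_elim_eq_neg_one_pow {R : Type*} [CommMonoid R] [HasDistribNeg R] [Fintype β]
    (g : α → Option β) :
    ∏ x, (g x).elim 1 (fun _ ↦ -1) = (-1 : R) ^ ∑ b, #(someFibers g b) := by
  rw [← prod_fiberwise' univ g fun o ↦ o.elim (1 : R) fun _ ↦ -1, Fintype.prod_option,
    ← prod_pow_eq_pow_sum]
  simp [someFibers]

end someFibers

theorem homEulerChar_eq_sum_covering_prod (m n : ℕ) :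
    homEulerChar m n = (-1) ^ m * ∑ g : Fin n → Option (Fin m),
      if ∀ i, ∃ x, g x = some i then ∏ x, (g x).elim 1 (fun _ ↦ -1) else 0 := by
  rw [homEulerChar, mul_sum]
  symm
  refine Fintype.sum_of_injective someFibers someFibers_injective _ _ (fun η hη ↦ ?_) fun g ↦ ?_
  · rw [range_someFibers] at hη
    exact if_neg fun h ↦ hη h.2
  have hne (i : Fin m) : (someFibers g i).Nonempty ↔ ∃ x, g x = some i := by
    simp [someFibers, filter_nonempty_iff]
  have hdisj : ∀ i j : Fin m, i ≠ j → Disjoint (someFibers g i) (someFibers g j) :=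
    range_someFibers.subset ⟨g, rfl⟩
  simp only [hne, and_iff_left hdisj]
  split_ifs with hcover
  · have hm : m ≤ ∑ i, #(someFibers g i) := by
      simpa using sum_le_sum (s := univ) fun i _ ↦ one_le_card.2 ((hne i).2 (hcover i))
    rw [prod_option_elim_eq_neg_one_pow, neg_one_pow_tsub hm, pow_add, mul_comm]
  · rw [mul_zero]

theorem homEulerChar_eq_fwdDiff_iter (m n : ℕ) :
    homEulerChar m n = (-1) ^ (m + n) * (Δ_[1])^[m] (fun x : ℤ ↦ x ^ n) (-1) := by
  have h := inclusion_exclusion_sum_prod_of_covering (α := Fin n) Embedding.some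
    fun o : Option (Fin m) ↦ o.elim (1 : ℤ) fun _ ↦ -1
  simp only [Embedding.some_apply, Fintype.card_fin] at h
  rw [homEulerChar_eq_sum_covering_prod, h, fwdDiff_iter_eq_sum_neg_one_pow_card_smul, pow_add,
    mul_assoc]
  congr 1
  rw [mul_sum]
  refine sum_congr rfl fun U _ ↦ ?_
  have hcompl : (U.map Embedding.some)ᶜ = insertNone Uᶜ := by
    ext (_ | b) <;> simp
  rw [hcompl, sum_insertNone]
  simp only [Option.elim, sum_const, smul_eq_mul, nsmul_eq_mul, mul_neg_one]
  rw [mul_left_comm, ← mul_pow]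
  ring

theorem fwdDiff_iter_succ_smul_comp_sub_one {G : Type*} [AddCommGroup G] (f : ℤ → G) (m : ℕ) :
    (Δ_[1])^[m + 1] (fun x ↦ x • f (x - 1)) 0 = (m + 1) • (Δ_[1])^[m] f 0 := by
  rw [fwdDiff_iter_eq_sum_shift, fwdDiff_iter_eq_sum_shift, sum_range_succ', smul_sum]
  simp only [zero_add, nsmul_eq_mul, mul_one, zero_smul, smul_zero, add_zero,
    Nat.add_sub_add_right, smul_smul]
  refine sum_congr rfl fun i _ ↦ ?_
  rw [Nat.cast_add_one, add_sub_cancel_right, ← natCast_zsmul, smul_smul, mul_assoc,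
    ← Nat.cast_add_one, ← Nat.cast_mul, ← Nat.add_one_mul_choose_eq]
  congr 1
  push_cast
  ring

theorem fwdDiff_iter_pow_succ_add_pow (m n : ℕ) :
    (Δ_[1])^[m + 1] (fun x : ℤ ↦ x ^ (n + 1)) (-1) + (Δ_[1])^[m + 1] (fun x : ℤ ↦ x ^ n) (-1) =
      (m + 1) * (Δ_[1])^[m] (fun x : ℤ ↦ x ^ n) 0 := by
  have hshift (k : ℕ) :
      (Δ_[1])^[m + 1] (fun x : ℤ ↦ x ^ k) (-1) = (Δ_[1])^[m + 1] (fun x ↦ (x - 1) ^ k) 0 := by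
    simpa [sub_eq_add_neg] using (fwdDiff_iter_comp_add 1 (fun x : ℤ ↦ x ^ k) (-1) (m + 1) 0).symm
  rw [hshift, hshift, ← Pi.add_apply, ← fwdDiff_iter_add]
  convert fwdDiff_iter_succ_smul_comp_sub_one (fun x : ℤ ↦ x ^ n) m using 3
  · simp only [Pi.add_apply, smul_eq_mul]
    ring
  · simp

theorem neg_one_pow_mul_fwdDiff_iter_pow_eq_sum (m n : ℕ) (h : m + 1 ≤ n) :
    (-1) ^ n * (Δ_[1])^[m + 1] (fun x : ℤ ↦ x ^ n) (-1) =
      (m + 1) * ∑ k ∈ Icc (m + 1) n, (-1) ^ k * (Δ_[1])^[m] (fun x : ℤ ↦ x ^ (k - 1)) 0 := by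
  induction n, h using Nat.le_induction with
  | base =>
    have hfactorial (j : ℕ) (y : ℤ) : (Δ_[1])^[j] (fun x : ℤ ↦ x ^ j) y = j.factorial :=
      congrFun fwdDiff_iter_eq_factorial y
    rw [Icc_self, sum_singleton, add_tsub_cancel_right, hfactorial, hfactorial, Nat.factorial_succ]
    push_cast
    ring
  | succ n hn ih =>
    rw [sum_Icc_succ_top (by omega), mul_add, ← ih, add_tsub_cancel_right]
    linear_combination (-1) ^ (n + 1) * fwdDiff_iter_pow_succ_add_pow m n

/-- for `n ≥ m ≥ 1`,
`(m−1)!·f(m,n) = (−1)^{m+n+1}·(m−1)! + m!·(−1)^n·Σ_{k=m}^{n} (−1)^k·Surj(k−1, m−1)`. -/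
theorem sphereCount_stirling_formula (m n : ℕ) (hm : 1 ≤ m) (hmn : m ≤ n) :
    ((m - 1).factorial : ℤ) * sphereCount m n =
      (-1 : ℤ) ^ (m + n + 1) * ((m - 1).factorial : ℤ) +
        (m.factorial : ℤ) * (-1 : ℤ) ^ n *
          ∑ k ∈ Finset.Icc m n, (-1 : ℤ) ^ k * (Surj (k - 1) (m - 1) : ℤ) := by
  obtain ⟨m, rfl⟩ := Nat.exists_eq_add_of_le' hm
  have hsum := neg_one_pow_mul_fwdDiff_iter_pow_eq_sum m n hmn
  have hsq : ((-1 : ℤ) ^ m) ^ 2 = 1 := by rw [← pow_mul, mul_comm, pow_mul, neg_one_sq, one_pow]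
  simp only [add_tsub_cancel_right, cast_surj_eq_fwdDiff_iter]
  rw [sphereCount, homEulerChar_eq_fwdDiff_iter, neg_one_pow_tsub hmn, Nat.factorial_succ]
  push_cast
  linear_combination ((m.factorial : ℤ) * (-1) ^ n) * hsum +
    ((m.factorial : ℤ) * ((-1) ^ n) ^ 2 * (Δ_[1])^[m + 1] (fun x : ℤ ↦ x ^ n) (-1)) * hsq
end

section
/- For every integer n ≥ 2, the following two simple graphs are isomorphic: (1) the graph whose vertices are the injective maps ι : {1,…,n−1} → {1,…,n}, with ι and κ adjacent iff they differ in exactly one coordinate (there is exactly one a with ι(a) ≠ κ(a)); and (2) the Cayley graph of the symmetric group S_n with respect to the generating set consisting of the n−1 transpositions (a, n) for a = 1,…,n−1, i.e., the graph on all permutations of {1,…,n}, with σ and τ adjacent iff τ = σ∘(a,n) for some a ∈ {1,…,n−1}. The isomorphism sends an injection ι to the permutation whose values on 1,…,n−1 are ι(1),…,ι(n−1) and whose value on n is the unique element of {1,…,n} missing from the image of ι. (This identifies Hom(K_{n−1},K_n), whose vertices are the injections and whose edges are the pairs of injections differing in one value, with this Cayley graph.) -/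
section Aux
variable {n : ℕ}

noncomputable def missAux (h : 0 < n) (ι : Fin (n-1) ↪ Fin n) : Fin n := by
  have hne : ((Finset.univ.image ι)ᶜ : Finset (Fin n)).Nonempty := by
    rw [← Finset.card_pos, Finset.card_compl,
      Finset.card_image_of_injective _ ι.injective]
    simp only [Finset.card_univ, Fintype.card_fin]
    omega
  exact hne.choose

lemma missAux_not_mem (h : 0 < n) (ι : Fin (n-1) ↪ Fin n) :
    missAux h ι ∉ Set.range ι := by
  have hne : ((Finset.univ.image ι)ᶜ : Finset (Fin n)).Nonempty := by
    rw [← Finset.card_pos, Finset.card_compl,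
      Finset.card_image_of_injective _ ι.injective]
    simp only [Finset.card_univ, Fintype.card_fin]
    omega
  have := hne.choose_spec
  simp only [Finset.mem_compl, Finset.mem_image] at this
  rintro ⟨a, ha⟩
  exact this ⟨a, Finset.mem_univ a, ha⟩

lemma finCases' (h : 0 < n) (i : Fin n) :
    (∃ b : Fin (n-1), i = Fin.castLE (by omega) b) ∨ i = ⟨n - 1, by omega⟩ := by
  rcases lt_or_ge (i : ℕ) (n - 1) with hi | hi
  · exact Or.inl ⟨⟨i, hi⟩, Fin.ext rfl⟩
  · exact Or.inr (Fin.ext (by have := i.isLt; simp only; omega))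

noncomputable def toPermAux (h : 0 < n) (ι : Fin (n-1) ↪ Fin n) : Equiv.Perm (Fin n) :=
  Equiv.ofBijective (fun i => if hi : (i : ℕ) < n - 1 then ι ⟨i, hi⟩ else missAux h ι)
    (by
      rw [← Finite.injective_iff_bijective]
      intro i j hij
      simp only at hij
      split_ifs at hij with h1 h2 h2
      · have := ι.injective hij
        exact Fin.ext (by simpa using this)
      · exact absurd ⟨_, hij⟩ (missAux_not_mem h ι)
      · exact absurd ⟨_, hij.symm⟩ (missAux_not_mem h ι)
      · exact Fin.ext (by omega))

lemma toPermAux_castLE (h : 0 < n) (ι : Fin (n-1) ↪ Fin n) (a : Fin (n-1)) :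
    toPermAux h ι (Fin.castLE (by omega) a) = ι a := by
  simp only [toPermAux, Equiv.ofBijective_apply, Fin.coe_castLE]
  rw [dif_pos a.isLt]

lemma toPermAux_last (h : 0 < n) (ι : Fin (n-1) ↪ Fin n) :
    toPermAux h ι ⟨n - 1, by omega⟩ = missAux h ι := by
  simp only [toPermAux, Equiv.ofBijective_apply]
  rw [dif_neg (by omega)]

lemma eq_toPermAux_last (h : 0 < n) (ι : Fin (n-1) ↪ Fin n) {y : Fin n}
    (hy : y ∉ Set.range ι) : y = toPermAux h ι ⟨n - 1, by omega⟩ := by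
  set σ := toPermAux h ι with hσ
  have hy' : y = σ (σ.symm y) := (σ.apply_symm_apply y).symm
  rcases finCases' h (σ.symm y) with ⟨b, hb⟩ | hb
  · exfalso
    apply hy
    refine ⟨b, ?_⟩
    rw [← toPermAux_castLE h ι b, ← hσ, ← hb]
    exact hy'.symm
  · rw [hy', hb]

lemma castLE_ne_last (h : 0 < n) (b : Fin (n-1)) :
    Fin.castLE (by omega : n - 1 ≤ n) b ≠ ⟨n - 1, by omega⟩ := by
  intro hc
  have : (b : ℕ) = n - 1 := congrArg Fin.val hc
  have := b.isLt
  omega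

end Aux

/-- for `n ≥ 2`, the graph `Hom(K_{n-1}, K_n)` — whose vertices are the
injections `{1,…,n-1} ↪ {1,…,n}`, two injections being adjacent iff they differ in
exactly one coordinate — is isomorphic to the Cayley graph of the symmetric group `S_n`
with generators the transpositions `(a, n)`, `a = 1,…,n-1`.  The isomorphism sends an
injection `ι` to the permutation extending `ι` by the unique value missing from the
image of `ι` in the last position. -/
theorem hom_Knm1_Kn_cayley_graph (n : ℕ) (hn : 2 ≤ n) :
    ∃ g : (Fin (n - 1) ↪ Fin n) ≃ Equiv.Perm (Fin n),
      (∀ (ι : Fin (n - 1) ↪ Fin n) (a : Fin (n - 1)),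
          g ι (Fin.castLE (by omega) a) = ι a) ∧
      (∀ ι : Fin (n - 1) ↪ Fin n,
          g ι ⟨n - 1, by omega⟩ ∉ Set.range ι) ∧
      (∀ ι κ : Fin (n - 1) ↪ Fin n,
          (∃! a : Fin (n - 1), ι a ≠ κ a) ↔
            ∃ a : Fin (n - 1),
              g κ = g ι * Equiv.swap (Fin.castLE (by omega) a) ⟨n - 1, by omega⟩) := by
  have h : 0 < n := by omega
  have hcast : ∀ (σ : Equiv.Perm (Fin n)),
      Function.Injective (fun a : Fin (n-1) => σ (Fin.castLE (by omega : n - 1 ≤ n) a)) := by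
    intro σ a b hab
    exact Fin.castLE_injective _ (σ.injective hab)
  refine ⟨⟨toPermAux h, fun σ => ⟨fun a => σ (Fin.castLE (by omega) a), hcast σ⟩, ?_, ?_⟩,
    ?_, ?_, ?_⟩
  · -- left inverse
    intro ι
    apply DFunLike.ext
    intro a
    exact toPermAux_castLE h ι a
  · -- right inverse
    intro σ
    apply Equiv.ext
    intro i
    rcases finCases' h i with ⟨b, rfl⟩ | rfl
    · exact toPermAux_castLE h _ b
    · symm
      apply eq_toPermAux_last h
      rintro ⟨a, ha⟩
      simp only [Function.Embedding.coeFn_mk] at ha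
      exact castLE_ne_last h a (σ.injective ha)
  · intro ι a; exact toPermAux_castLE h ι a
  · intro ι
    have : toPermAux h ι ⟨n-1, by omega⟩ = missAux h ι := toPermAux_last h ι
    simpa [this] using missAux_not_mem h ι
  · intro ι κ
    simp only [Equiv.coe_fn_mk]
    constructor
    · rintro ⟨a, ha, huniq⟩
      refine ⟨a, ?_⟩
      have hκa : κ a ∉ Set.range ι := by
        rintro ⟨b, hb⟩
        by_cases hba : b = a
        · subst hba; exact ha hb
        · have hbb : ι b = κ b := by by_contra hc; exact hba (huniq b hc)
          exact hba (κ.injective (hbb.symm.trans hb))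
      have hιa : ι a ∉ Set.range κ := by
        rintro ⟨b, hb⟩
        by_cases hba : b = a
        · subst hba; exact ha hb.symm
        · have hbb : ι b = κ b := by by_contra hc; exact hba (huniq b hc)
          exact hba (ι.injective (hbb.trans hb))
      apply Equiv.ext
      intro i
      rw [Equiv.Perm.mul_apply]
      rcases finCases' h i with ⟨b, rfl⟩ | rfl
      · by_cases hba : b = a
        · subst hba
          rw [toPermAux_castLE, Equiv.swap_apply_left]
          exact eq_toPermAux_last h ι hκa
        · rw [toPermAux_castLE, Equiv.swap_apply_of_ne_of_ne
            (fun hc => hba (Fin.castLE_injective _ hc)) (castLE_ne_last h b),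
            toPermAux_castLE]
          by_contra hc
          exact hba (huniq b (fun he => hc he.symm))
      · rw [Equiv.swap_apply_right, toPermAux_castLE]
        exact ((eq_toPermAux_last h κ hιa).symm).symm ▸
          (eq_toPermAux_last h κ hιa).symm
    · rintro ⟨a, hEq⟩
      have hdiff : ∀ b : Fin (n-1), b ≠ a → ι b = κ b := by
        intro b hba
        have hκb : κ b = toPermAux h κ (Fin.castLE (by omega) b) :=
          (toPermAux_castLE h κ b).symm
        rw [hκb, hEq, Equiv.Perm.mul_apply, Equiv.swap_apply_of_ne_of_ne
          (fun hc => hba (Fin.castLE_injective _ hc)) (castLE_ne_last h b),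
          toPermAux_castLE]
      have hκa : κ a = toPermAux h ι ⟨n - 1, by omega⟩ := by
        rw [← toPermAux_castLE h κ a, hEq, Equiv.Perm.mul_apply, Equiv.swap_apply_left]
      refine ⟨a, ?_, ?_⟩
      · show ι a ≠ κ a
        rw [hκa, toPermAux_last]
        intro hc
        exact missAux_not_mem h ι ⟨a, hc⟩
      · intro b hb
        by_contra hba
        exact hb (hdiff b hba)
end

section
/- For an integer t ≥ 3, consider the proper 3-colorings of the cycle C_t (maps c : Z_t → {1,2,3} with c(x) ≠ c(x+1) for all x ∈ Z_t), and the equivalence relation on them generated by: c ~ c' whenever c and c' differ at exactly one vertex. Then the number c_t of equivalence classes (equal to the number of connected components of Hom(C_t, K_3)) is: c_t = ⌊(t+1)/3⌋ if 3 does not divide t, and c_t = t/3 + 5 if 3 divides t. -/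
/-!
Write `step c x = c (x + 1) - c x ∈ {1, 2} ⊆ ZMod 3`. Recoloring vertex `v` is possible exactly
when `step c (v - 1) ≠ step c v`, and it swaps these two steps. So the number `n` of steps equal
to `2` is invariant, and `t + n ≡ 0 (mod 3)` since the steps sum to `0`. A coloring with all steps
equal admits no recoloring; this needs `3 ∣ t` and gives `6` isolated colorings. Otherwise
adjacent transpositions sort the steps (the `1`s first) without touching `c 0`, and recoloring
`0` in a sorted coloring lowers `c 0` by one; so the colorings with a given `n`, `0 < n < t`, form
a single class.
-/

open Finset

theorem ZMod.val_le_induction {t : ℕ} [NeZero t] {P : ZMod t → Prop}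
    (hP : ∀ x : ZMod t, x.val + 1 < t → P x → P (x + 1)) {x y : ZMod t} (hxy : x.val ≤ y.val)
    (hx : P x) : P y := by
  have key : ∀ k : ℕ, x.val + k < t → P (x + k) := by
    intro k
    induction k with
    | zero => exact fun _ => by simpa using hx
    | succ k ih =>
      intro hk
      have hval : (x + k).val = x.val + k := by
        rw [ZMod.val_add_of_lt] <;> rw [ZMod.val_cast_of_lt (by omega)]; omega
      simpa [add_assoc] using hP _ (by omega) (ih (by omega))
  have := key (y.val - x.val) (by have := ZMod.val_lt y; omega)
  rwa [Nat.cast_sub hxy, ZMod.natCast_zmod_val, ZMod.natCast_zmod_val, add_sub_cancel] at this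

theorem ZMod.apply_val_add_one {t : ℕ} [Fact (1 < t)] {α : Type*} {u : ℕ → α} (hu : u t = u 0)
    (x : ZMod t) : u (x + 1).val = u (x.val + 1) := by
  rw [ZMod.val_add, ZMod.val_one]
  rcases (Nat.add_one_le_of_lt (ZMod.val_lt x)).lt_or_eq with h | h
  · rw [Nat.mod_eq_of_lt h]
  · rw [h, Nat.mod_self, hu]

theorem Quot.natCard_eq_card_of_invariant {α β : Type*} {r : α → α → Prop} (f : α → β)
    (s : Finset β) (hr : ∀ a b, r a b → f a = f b)
    (hf : ∀ a b, f a = f b → Quot.mk r a = Quot.mk r b) (hs : Set.range f = s) :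
    Nat.card (Quot r) = #s := by
  have hinj : Function.Injective (Quot.lift f hr) := by
    rintro ⟨a⟩ ⟨b⟩ h
    exact hf a b h
  rw [← Nat.card_range_of_injective hinj, Set.range_quot_lift, hs, Nat.card_coe_set_eq,
    Set.ncard_coe_finset]

theorem Nat.card_Ioo_filter_three_dvd_add (t : ℕ) :
    #{n ∈ Ioo 0 t | 3 ∣ t + n} = (2 * t - 1) / 3 - t / 3 := by
  have hmap : {n ∈ Ioo 0 t | 3 ∣ t + n}.map (addLeftEmbedding t) =
      {m ∈ Ioc 0 (2 * t - 1) | 3 ∣ m} \ {m ∈ Ioc 0 t | 3 ∣ m} := by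
    ext m
    simp only [mem_map, mem_filter, mem_Ioo, mem_sdiff, mem_Ioc, addLeftEmbedding_apply]
    constructor
    · rintro ⟨n, hn, rfl⟩
      omega
    · intro h
      exact ⟨m - t, by omega⟩
  rw [← card_map, hmap, card_sdiff_of_subset, Nat.Ioc_filter_dvd_card_eq_div,
    Nat.Ioc_filter_dvd_card_eq_div]
  intro m
  simp only [mem_filter, mem_Ioc]
  omega

/-- Colors are taken in `ZMod 3`, which is definitionally `Fin 3`. -/
abbrev CycleColoring (t : ℕ) := {c : ZMod t → ZMod 3 // ∀ x, c x ≠ c (x + 1)}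

namespace CycleColoring

variable {t : ℕ}

def Recolor (c c' : CycleColoring t) : Prop := ∃! v, c.1 v ≠ c'.1 v

def step (c : CycleColoring t) (x : ZMod t) : ZMod 3 := c.1 (x + 1) - c.1 x

def Frozen (c : CycleColoring t) : Prop := ∀ x y, step c x = step c y

theorem step_ne_zero (c : CycleColoring t) (x : ZMod t) : step c x ≠ 0 :=
  sub_ne_zero.mpr (c.2 x).symm

theorem apply_add_one (c : CycleColoring t) (x : ZMod t) : c.1 (x + 1) = c.1 x + step c x := by
  rw [step, add_sub_cancel]

section recolor

variable [Fact (1 < t)]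

/-- The neighbours `a`, `e` of a recolored vertex avoid its two colors `b ≠ b'`, so `a = e` is
the third color; the steps around the vertex are then `± (b - a)`. -/
theorem step_eq_comp_swap {c c' : CycleColoring t} {v : ZMod t} (hv : c.1 v ≠ c'.1 v)
    (hoff : ∀ x ≠ v, c'.1 x = c.1 x) :
    step c (v - 1) ≠ step c v ∧ step c' = step c ∘ Equiv.swap (v - 1) v := by
  have hprev : v - 1 ≠ v := by simp
  have hnext : v + 1 ≠ v := by simp
  have hcol : ∀ a b b' e : ZMod 3, a ≠ b → a ≠ b' → b ≠ b' → e ≠ b → e ≠ b' →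
      b - a ≠ e - b ∧ b' - a = e - b ∧ e - b' = b - a := by decide
  have ha := c.2 (v - 1)
  have ha' := c'.2 (v - 1)
  rw [sub_add_cancel] at ha ha'
  have he := c'.2 v
  rw [hoff _ hnext] at he
  obtain ⟨hne, h1, h2⟩ := hcol _ _ _ _ ha (hoff _ hprev ▸ ha') hv (c.2 v).symm he.symm
  refine ⟨by simpa [step] using hne, funext fun x => ?_⟩
  rcases eq_or_ne x v with rfl | hxv
  · simp [step, hoff _ hnext, h2]
  rcases eq_or_ne x (v - 1) with rfl | hxv'
  · simp [step, hoff _ hprev, h1]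
  have hxv'' : x + 1 ≠ v := fun h => hxv' (eq_sub_of_add_eq h)
  simp [step, Equiv.swap_apply_of_ne_of_ne hxv' hxv, hoff _ hxv, hoff _ hxv'']

theorem Recolor.exists_swap {c c' : CycleColoring t} (h : Recolor c c') :
    ∃ v, step c (v - 1) ≠ step c v ∧ step c' = step c ∘ Equiv.swap (v - 1) v := by
  obtain ⟨v, hv, huniq⟩ := h
  exact ⟨v, step_eq_comp_swap hv fun x hx => by_contra fun h => hx (huniq x (Ne.symm h))⟩

theorem exists_recolor (c : CycleColoring t) {v : ZMod t}
    (hv : step c (v - 1) ≠ step c v) :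
    ∃ c', Recolor c c' ∧ step c' = step c ∘ Equiv.swap (v - 1) v ∧ ∀ x ≠ v, c'.1 x = c.1 x := by
  have hnext : v + 1 ≠ v := by simp
  have ha := c.2 (v - 1)
  rw [sub_add_cancel] at ha
  have hae : c.1 (v - 1) = c.1 (v + 1) := by
    have : ∀ a b e : ZMod 3, a ≠ b → e ≠ b → b - a ≠ e - b → a = e := by decide
    exact this _ _ _ ha (c.2 v).symm (by simpa [step] using hv)
  obtain ⟨b', hb'a, hb'b⟩ : ∃ b', b' ≠ c.1 (v - 1) ∧ b' ≠ c.1 v := by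
    have : ∀ a b : ZMod 3, ∃ b', b' ≠ a ∧ b' ≠ b := by decide
    exact this _ _
  have hoff : ∀ x ≠ v, Function.update c.1 v b' x = c.1 x := fun x hx =>
    Function.update_of_ne hx _ _
  have hproper : ∀ x, Function.update c.1 v b' x ≠ Function.update c.1 v b' (x + 1) := by
    intro x
    rcases eq_or_ne x v with rfl | hxv
    · rw [Function.update_self, hoff _ hnext, ← hae]
      exact hb'a
    rcases eq_or_ne (x + 1) v with hxv' | hxv'
    · rw [hxv', Function.update_self, hoff _ hxv, eq_sub_of_add_eq hxv']
      exact hb'a.symm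
    · rw [hoff _ hxv, hoff _ hxv']
      exact c.2 x
  have hv' : c.1 v ≠ Function.update c.1 v b' v := by simpa using hb'b.symm
  refine ⟨⟨_, hproper⟩, ⟨v, hv', fun y hy => ?_⟩, (step_eq_comp_swap hv' hoff).2, hoff⟩
  by_contra h
  exact hy (hoff y h).symm

theorem Recolor.not_frozen {c c' : CycleColoring t} (h : Recolor c c') :
    ¬Frozen c ∧ ¬Frozen c' := by
  obtain ⟨v, hne, hswap⟩ := h.exists_swap
  refine ⟨fun hc => hne (hc _ _), fun hc' => hne ?_⟩
  have := hc' (v - 1) v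
  simpa [hswap] using this.symm

theorem not_frozen_of_mk_eq {c d : CycleColoring t}
    (h : Quot.mk Recolor c = Quot.mk Recolor d) (hc : ¬Frozen c) : ¬Frozen d := by
  have := congrArg (Quot.lift (fun c => ¬Frozen c) fun _ _ h =>
    propext ⟨fun _ => h.not_frozen.2, fun _ => h.not_frozen.1⟩) h
  simpa [hc] using this

end recolor

section twos

variable [NeZero t]

theorem ext_of_step {c d : CycleColoring t} (h0 : c.1 0 = d.1 0) (h : step c = step d) :
    c = d := by
  have key : ∀ n : ℕ, c.1 n = d.1 n := by
    intro n
    induction n with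
    | zero => simpa using h0
    | succ n ih => rw [Nat.cast_succ, apply_add_one, apply_add_one, ih, h]
  exact Subtype.ext <| funext fun x => by rw [← ZMod.natCast_zmod_val x]; exact key _

def twos (c : CycleColoring t) : Finset (ZMod t) := univ.filter (step c · = 2)

@[simp]
theorem mem_twos {c : CycleColoring t} {x : ZMod t} : x ∈ twos c ↔ step c x = 2 := by
  simp [twos]

theorem twos_eq_map_swap {c c' : CycleColoring t} {a b : ZMod t}
    (h : step c' = step c ∘ Equiv.swap a b) :
    twos c' = (twos c).map (Equiv.swap a b).toEmbedding := by
  ext x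
  simp [h, mem_map_equiv]

theorem sum_step (c : CycleColoring t) : ∑ x, step c x = 0 := by
  simp only [step, sum_sub_distrib]
  exact sub_eq_zero.mpr (Equiv.sum_comp (Equiv.addRight (1 : ZMod t)) c.1)

theorem sum_step_eq_add_card_twos (c : CycleColoring t) : ∑ x, step c x = t + #(twos c) := by
  have h : ∀ x, step c x = 1 + if step c x = 2 then 1 else 0 := fun x => by
    have : ∀ a : ZMod 3, a ≠ 0 → a = 1 + if a = 2 then 1 else 0 := by decide
    exact this _ (step_ne_zero c x)
  rw [sum_congr rfl fun x _ => h x, sum_add_distrib, sum_boole, sum_const, card_univ,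
    ZMod.card, nsmul_one, twos]

theorem three_dvd_add_card_twos (c : CycleColoring t) : 3 ∣ t + #(twos c) := by
  rw [← ZMod.natCast_eq_zero_iff, Nat.cast_add, ← sum_step_eq_add_card_twos, sum_step]

theorem Frozen.three_dvd {c : CycleColoring t} (hc : Frozen c) : 3 ∣ t := by
  have h := sum_step c
  rw [sum_congr rfl fun x _ => hc x 0, sum_const, card_univ, ZMod.card, nsmul_eq_mul,
    mul_eq_zero] at h
  exact (ZMod.natCast_eq_zero_iff _ _).mp (h.resolve_right (step_ne_zero c 0))

theorem exists_mem_twos_not_mem_twos {c : CycleColoring t} (hc : ¬Frozen c) :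
    ∃ x y, x ∈ twos c ∧ y ∉ twos c := by
  simp only [Frozen, not_forall] at hc
  obtain ⟨x, y, hxy⟩ := hc
  have : ∀ a b : ZMod 3, a ≠ 0 → b ≠ 0 → a ≠ b → (a = 2 ∧ b ≠ 2) ∨ (b = 2 ∧ a ≠ 2) := by
    decide
  rcases this _ _ (step_ne_zero c x) (step_ne_zero c y) hxy with ⟨hx, hy⟩ | ⟨hy, hx⟩
  · exact ⟨x, y, by simpa using hx, by simpa using hy⟩
  · exact ⟨y, x, by simpa using hy, by simpa using hx⟩

def Sorted (c : CycleColoring t) : Prop :=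
  ∀ ⦃x y : ZMod t⦄, x.val ≤ y.val → x ∈ twos c → y ∈ twos c

theorem Sorted.twos_subset_erase {c d : CycleColoring t} (hc : Sorted c) (hd : Sorted d)
    {x : ZMod t} (hxc : x ∈ twos c) (hxd : x ∉ twos d) : twos d ⊆ (twos c).erase x := by
  intro y hy
  have hxy : x.val < y.val := lt_of_not_ge fun h => hxd (hd h hy)
  exact mem_erase.mpr ⟨fun h => hxy.ne (congrArg ZMod.val h.symm), hc hxy.le hxc⟩

theorem Sorted.twos_eq {c d : CycleColoring t} (hc : Sorted c) (hd : Sorted d)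
    (h : #(twos c) = #(twos d)) : twos c = twos d := by
  refine eq_of_subset_of_card_le (fun x hxc => ?_) h.ge
  by_contra hxd
  have := card_le_card (hc.twos_subset_erase hd hxc hxd)
  rw [card_erase_of_mem hxc] at this
  have := card_pos.mpr ⟨x, hxc⟩
  omega

theorem step_eq_of_twos_eq {c d : CycleColoring t} (h : twos c = twos d) : step c = step d := by
  funext x
  have hx : step c x = 2 ↔ step d x = 2 := by simp only [← mem_twos, h]
  have : ∀ a b : ZMod 3, a ≠ 0 → b ≠ 0 → (a = 2 ↔ b = 2) → a = b := by decide
  exact this _ _ (step_ne_zero c x) (step_ne_zero d x) hx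

theorem Sorted.eq {c d : CycleColoring t} (hc : Sorted c) (hd : Sorted d) (h0 : c.1 0 = d.1 0)
    (h : #(twos c) = #(twos d)) : c = d :=
  ext_of_step h0 (step_eq_of_twos_eq (hc.twos_eq hd h))

end twos

variable (t) in
def admissible : Finset (ℕ ⊕ ZMod 3 × ZMod 3) :=
  {n ∈ Ioo 0 t | 3 ∣ t + n}.disjSum (if 3 ∣ t then univ.filter (·.1 ≠ 0) else ∅)

section classes

variable [Fact (1 < t)]

theorem Recolor.card_twos_eq {c c' : CycleColoring t} (h : Recolor c c') :
    #(twos c) = #(twos c') := by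
  obtain ⟨v, -, hswap⟩ := h.exists_swap
  rw [twos_eq_map_swap hswap, card_map]

theorem card_twos_eq_of_mk_eq {c d : CycleColoring t}
    (h : Quot.mk Recolor c = Quot.mk Recolor d) : #(twos c) = #(twos d) :=
  congrArg (Quot.lift (fun c => #(twos c)) fun _ _ => Recolor.card_twos_eq) h

def potential (c : CycleColoring t) : ℕ := ∑ x ∈ twos c, x.val

theorem exists_recolor_potential_lt {c : CycleColoring t} {x : ZMod t} (hx : x.val + 1 < t)
    (h2 : x ∈ twos c) (h1 : x + 1 ∉ twos c) :
    ∃ c', Quot.mk Recolor c = Quot.mk Recolor c' ∧ c'.1 0 = c.1 0 ∧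
      potential c < potential c' := by
  have hval : (x + 1).val = x.val + 1 := by
    rw [ZMod.val_add_of_lt] <;> rw [ZMod.val_one]; omega
  have hne : step c (x + 1 - 1) ≠ step c (x + 1) := by
    rw [add_sub_cancel_right]
    exact fun h => h1 (mem_twos.mpr (h ▸ mem_twos.mp h2))
  obtain ⟨c', hr, hswap, hoff⟩ := exists_recolor c hne
  rw [add_sub_cancel_right] at hswap
  have hx0 : x + 1 ≠ 0 := fun h => by simp [h] at hval
  refine ⟨c', Quot.sound hr, hoff 0 hx0.symm, ?_⟩
  have hfix : ∑ y ∈ (twos c).erase x, (Equiv.swap x (x + 1) y).val =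
      ∑ y ∈ (twos c).erase x, y.val := by
    refine sum_congr rfl fun y hy => ?_
    rw [Equiv.swap_apply_of_ne_of_ne (ne_of_mem_erase hy)
      fun h => h1 (h ▸ mem_of_mem_erase hy :)]
  rw [potential, potential, twos_eq_map_swap hswap, sum_map, ← add_sum_erase _ _ h2,
    ← add_sum_erase _ _ h2]
  simp [hfix, hval]

/-- A coloring of maximal `potential` among those in the class of `c` with the color of `c` at `0`
admits no sorting move. -/
theorem exists_sorted (c : CycleColoring t) :
    ∃ d, Quot.mk Recolor c = Quot.mk Recolor d ∧ d.1 0 = c.1 0 ∧ Sorted d := by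
  classical
  obtain ⟨d, hd, hmax⟩ := (univ.filter fun d : CycleColoring t =>
    Quot.mk Recolor c = Quot.mk Recolor d ∧ d.1 0 = c.1 0).exists_max_image potential
    ⟨c, by simp⟩
  simp only [mem_filter, mem_univ, true_and] at hd hmax
  refine ⟨d, hd.1, hd.2, fun x y hxy hx => ZMod.val_le_induction (fun z hz h2 => ?_) hxy hx⟩
  by_contra h1
  obtain ⟨d', hdd', h0, hlt⟩ := exists_recolor_potential_lt hz h2 h1
  exact (hmax d' ⟨hd.1.trans hdd', h0.trans hd.2⟩).not_gt hlt

theorem Sorted.exists_recolor_sub_one {d : CycleColoring t} (hd : Sorted d) (hf : ¬Frozen d) :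
    ∃ d', Recolor d d' ∧ d'.1 0 = d.1 0 - 1 := by
  obtain ⟨x, y, hx, hy⟩ := exists_mem_twos_not_mem_twos hf
  have hlast : step d (-1) = 2 := by
    refine mem_twos.mp (hd ?_ hx)
    rw [ZMod.val_neg_of_ne_zero, ZMod.val_one]
    have := ZMod.val_lt x
    omega
  have hfirst : step d 0 = 1 := by
    have : ∀ a : ZMod 3, a ≠ 0 → a ≠ 2 → a = 1 := by decide
    exact this _ (step_ne_zero d 0) fun h => hy (hd (by simp) (mem_twos.mpr h))
  obtain ⟨d', hr, hswap, hoff⟩ :=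
    exists_recolor d (v := 0) (by rw [zero_sub, hlast, hfirst]; decide)
  refine ⟨d', hr, ?_⟩
  have h' := apply_add_one d' (-1)
  have h := apply_add_one d (-1)
  rw [neg_add_cancel] at h h'
  rw [h', h, hswap, hoff _ (by simp)]
  simp only [Function.comp_apply, zero_sub, Equiv.swap_apply_left, hlast, hfirst]
  ring

theorem exists_sorted_zero {c : CycleColoring t} (hc : ¬Frozen c) :
    ∃ d, Quot.mk Recolor c = Quot.mk Recolor d ∧ d.1 0 = 0 ∧ Sorted d := by
  have hstep : ∀ a, (∃ d, Quot.mk Recolor c = Quot.mk Recolor d ∧ d.1 0 = a ∧ Sorted d) →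
      ∃ d, Quot.mk Recolor c = Quot.mk Recolor d ∧ d.1 0 = a - 1 ∧ Sorted d := by
    rintro a ⟨d, hcd, rfl, hd⟩
    obtain ⟨d', hr, h0⟩ := hd.exists_recolor_sub_one (not_frozen_of_mk_eq hcd hc)
    obtain ⟨e, hde, he0, he⟩ := exists_sorted d'
    exact ⟨e, hcd.trans ((Quot.sound hr).trans hde), he0.trans h0, he⟩
  have hc0 := exists_sorted c
  have : ∀ a : ZMod 3, 0 = a ∨ 0 = a - 1 ∨ 0 = a - 1 - 1 := by decide
  rcases this (c.1 0) with h | h | h <;> rw [h]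
  · exact hc0
  · exact hstep _ hc0
  · exact hstep _ (hstep _ hc0)

theorem mk_eq_of_card_twos_eq {c d : CycleColoring t} (hc : ¬Frozen c) (hd : ¬Frozen d)
    (h : #(twos c) = #(twos d)) : Quot.mk Recolor c = Quot.mk Recolor d := by
  obtain ⟨c', hcc', hc'0, hc'⟩ := exists_sorted_zero hc
  obtain ⟨d', hdd', hd'0, hd'⟩ := exists_sorted_zero hd
  have : c' = d' := hc'.eq hd' (hc'0.trans hd'0.symm)
    ((card_twos_eq_of_mk_eq hcc').symm.trans (h.trans (card_twos_eq_of_mk_eq hdd')))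
  rw [hcc', hdd', this]

def ofPeriodic (u : ℕ → ZMod 3) (hu : ∀ j, u j ≠ u (j + 1)) (hper : u t = u 0) :
    CycleColoring t :=
  ⟨fun x => u x.val, fun x => show u x.val ≠ u (x + 1).val by
    rw [ZMod.apply_val_add_one hper]; exact hu x.val⟩

theorem step_ofPeriodic {u : ℕ → ZMod 3} (hu : ∀ j, u j ≠ u (j + 1)) (hper : u t = u 0)
    (x : ZMod t) : step (ofPeriodic u hu hper) x = u (x.val + 1) - u x.val := by
  simp only [step, ofPeriodic, ZMod.apply_val_add_one hper]

theorem exists_frozen (h3 : 3 ∣ t) {k : ZMod 3} (hk : k ≠ 0) (a : ZMod 3) :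
    ∃ c : CycleColoring t, Frozen c ∧ step c 0 = k ∧ c.1 0 = a := by
  have hu : ∀ j : ℕ, a + k * j ≠ a + k * (j + 1 : ℕ) := fun j h =>
    hk (by push_cast at h; linear_combination -h)
  have hper : a + k * t = a + k * (0 : ℕ) := by
    rw [(ZMod.natCast_eq_zero_iff t 3).mpr h3]; simp
  have hstep := step_ofPeriodic hu hper
  refine ⟨ofPeriodic _ hu hper, fun x y => ?_, ?_, ?_⟩
  · simp only [hstep]; push_cast; ring
  · simp only [hstep]; push_cast; ring
  · simp [ofPeriodic]

theorem exists_card_twos_eq {n : ℕ} (hn0 : 0 < n) (hnt : n < t) (h3 : 3 ∣ t + n) :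
    ∃ c : CycleColoring t, ¬Frozen c ∧ #(twos c) = n := by
  set u : ℕ → ZMod 3 := fun j => j + min j n
  have hdiff : ∀ j, u (j + 1) - u j = if j < n then 2 else 1 := by
    intro j
    split_ifs with h
    · simp only [u, min_eq_left (Nat.succ_le_of_lt h), min_eq_left h.le]
      push_cast; ring
    · simp only [u, min_eq_right (Nat.le_of_not_lt h), min_eq_right (by omega : n ≤ j + 1)]
      push_cast; ring
  have hu : ∀ j, u j ≠ u (j + 1) := fun j h => by
    have := hdiff j
    rw [h, sub_self] at this
    split_ifs at this <;> revert this <;> decide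
  have hper : u t = u 0 := by
    simp only [u, min_eq_right hnt.le, min_eq_left (Nat.zero_le n)]
    rw [← Nat.cast_add, (ZMod.natCast_eq_zero_iff _ 3).mpr h3]; simp
  have hstep : ∀ x, step (ofPeriodic u hu hper) x = if x.val < n then 2 else 1 := fun x => by
    rw [step_ofPeriodic, hdiff]
  refine ⟨ofPeriodic u hu hper, fun hf => ?_, ?_⟩
  · have := hf 0 (n : ZMod t)
    rw [hstep, hstep, ZMod.val_zero, ZMod.val_cast_of_lt hnt, if_pos hn0,
      if_neg (lt_irrefl n)] at this
    revert this; decide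
  · have : twos (ofPeriodic u hu hper) = univ.filter (fun x : ZMod t => x.val < n) := by
      ext x
      simp only [mem_twos, hstep, mem_filter, mem_univ, true_and]
      split_ifs with h
      · simp [h]
      · simp only [h, iff_false]; decide
    rw [this]
    refine .trans ?_ (card_range n)
    refine card_nbij (t := range n) ZMod.val (fun x hx => by simpa using hx)
      (ZMod.val_injective t).injOn fun j hj => ?_
    have hjn : j < n := mem_range.mp hj
    have hval : (j : ZMod t).val = j := ZMod.val_cast_of_lt (hjn.trans hnt)
    refine ⟨(j : ZMod t), ?_, hval⟩
    simp [hval, hjn]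

open Classical in
/-- A complete invariant of the classes; a frozen coloring is alone in its class. -/
noncomputable def invariant (c : CycleColoring t) : ℕ ⊕ ZMod 3 × ZMod 3 :=
  if Frozen c then .inr (step c 0, c.1 0) else .inl #(twos c)

theorem invariant_eq_of_recolor {c d : CycleColoring t} (h : Recolor c d) :
    invariant c = invariant d := by
  rw [invariant, invariant, if_neg h.not_frozen.1, if_neg h.not_frozen.2, h.card_twos_eq]

theorem mk_eq_of_invariant_eq {c d : CycleColoring t} (h : invariant c = invariant d) :
    Quot.mk Recolor c = Quot.mk Recolor d := by
  unfold invariant at h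
  split_ifs at h with hc hd hd
  · obtain ⟨h1, h0⟩ := Prod.mk.inj (Sum.inr_injective h)
    rw [ext_of_step h0 (funext fun x => by rw [hc x 0, hd x 0, h1])]
  · exact mk_eq_of_card_twos_eq hc hd (Sum.inl_injective h)

theorem range_invariant : Set.range (invariant (t := t)) = admissible t := by
  ext p
  constructor
  · rintro ⟨c, rfl⟩
    unfold invariant
    split_ifs with hc
    · simp [admissible, hc.three_dvd, step_ne_zero c 0]
    · obtain ⟨x, y, hx, hy⟩ := exists_mem_twos_not_mem_twos hc
      have := card_lt_univ_of_notMem hy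
      rw [ZMod.card] at this
      simp [admissible, three_dvd_add_card_twos, card_pos.mpr ⟨x, hx⟩, this]
  · rcases p with n | ⟨k, a⟩
    · intro hn
      simp only [admissible, mem_coe, inl_mem_disjSum, mem_filter, mem_Ioo] at hn
      obtain ⟨c, hc, hcard⟩ := exists_card_twos_eq hn.1.1 hn.1.2 hn.2
      exact ⟨c, by rw [invariant, if_neg hc, hcard]⟩
    · intro hn
      simp only [admissible, mem_coe, inr_mem_disjSum] at hn
      split_ifs at hn with h3
      · obtain ⟨c, hc, hk, ha⟩ := exists_frozen h3 (by simpa using hn) a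
        exact ⟨c, by rw [invariant, if_pos hc, hk, ha]⟩
      · simp at hn

end classes

end CycleColoring

/-- the number of connected components of `Hom(C_t, K_3)`, i.e. the number
of equivalence classes of proper 3-colorings of the cycle `C_t` under the equivalence
generated by single-vertex recolorings, equals `⌊(t+1)/3⌋` if `3 ∤ t`, and `t/3 + 5`
if `3 ∣ t`. -/
theorem card_components_hom_cycle_K3 (t : ℕ) (ht : 3 ≤ t) :
    Nat.card (Quot (fun c c' : {c : ZMod t → Fin 3 // ∀ x : ZMod t, c x ≠ c (x + 1)} =>
        ∃! v : ZMod t, c.1 v ≠ c'.1 v))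
      = if 3 ∣ t then t / 3 + 5 else (t + 1) / 3 := by
  have : Fact (1 < t) := ⟨by omega⟩
  change Nat.card (Quot (@CycleColoring.Recolor t)) = _
  rw [Quot.natCard_eq_card_of_invariant CycleColoring.invariant (CycleColoring.admissible t)
      (fun _ _ => CycleColoring.invariant_eq_of_recolor)
      (fun _ _ => CycleColoring.mk_eq_of_invariant_eq) CycleColoring.range_invariant,
    CycleColoring.admissible, card_disjSum, Nat.card_Ioo_filter_three_dvd_add]
  split_ifs with h3
  · rw [show #(univ.filter fun p : ZMod 3 × ZMod 3 => p.1 ≠ 0) = 6 by decide]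
    omega
  · rw [card_empty, add_zero]
    obtain h | h : t % 3 = 1 ∨ t % 3 = 2 := by omega
    all_goals omega
end

section
/- Let F be a finite forest (an acyclic simple graph), and let m be the maximal cardinality of an independent set in F. Then the complement graph F̄ reduces to an induced subgraph which is a complete graph on m vertices: there exists a subset S of the vertices with |S| = m such that any two distinct vertices of S are adjacent in F̄, and an ordering w₁, …, w_k of the vertices outside S such that for each i, the vertex w_i is dominated by some vertex other than w_i in the induced subgraph F̄ − {w₁, …, w_{i−1}}. -/
/-- A finset of vertices is independent: no two of its vertices are adjacent. -/
def IsIndepFinset {V : Type} (G : SimpleGraph V) (I : Finset V) : Prop :=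
  ∀ x ∈ I, ∀ y ∈ I, ¬ G.Adj x y

open SimpleGraph
lemma leaf_lemma {V : Type} [Fintype V] [DecidableEq V] (F : SimpleGraph V)
    (hacyc : F.IsAcyclic) (A : Finset V) {a b : V} (ha : a ∈ A) (hb : b ∈ A)
    (hab : F.Adj a b) :
    ∃ u w, u ∈ A ∧ w ∈ A ∧ F.Adj u w ∧ ∀ x ∈ A, F.Adj u x → x = w := by
  classical
  set P : Set ℕ := {n | ∃ (x y : V) (p : F.Walk x y), p.IsPath ∧
      (∀ v ∈ p.support, v ∈ A) ∧ p.length = n} with hP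
  have h1P : (1 : ℕ) ∈ P := by
    refine ⟨a, b, Walk.cons hab Walk.nil, ?_, ?_, rfl⟩
    · rw [Walk.cons_isPath_iff]
      exact ⟨Walk.IsPath.nil, by simp [hab.ne]⟩
    · intro v hv
      simp only [Walk.support_cons, Walk.support_nil, List.mem_cons,
        List.mem_singleton] at hv
      rcases hv with rfl | hv
      · exact ha
      · simp at hv; subst hv; exact hb
  have hne : P.Nonempty := ⟨1, h1P⟩
  have hbdd : BddAbove P := by
    refine ⟨Fintype.card V, fun n hn => ?_⟩
    obtain ⟨x, y, p, hp, _, rfl⟩ := hn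
    exact le_of_lt hp.length_lt
  obtain ⟨x, y, p, hp, hsupp, hlen⟩ := Nat.sSup_mem hne hbdd
  have hlen1 : 1 ≤ p.length := by
    rw [hlen]; exact le_csSup hbdd h1P
  cases p with
  | nil => simp at hlen1
  | @cons _ z _ h q =>
    refine ⟨x, z, hsupp x (by simp), hsupp z (by simp), h, ?_⟩
    intro x' hx'A hadj
    -- x' must be in the support, else we could extend the path
    have hx'supp : x' ∈ (Walk.cons h q).support := by
      by_contra hx'supp
      have hP' : (Walk.cons h q).length + 1 ∈ P := by
        refine ⟨x', y, Walk.cons hadj.symm (Walk.cons h q), ?_, ?_, by simp⟩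
        · rw [Walk.cons_isPath_iff]; exact ⟨hp, hx'supp⟩
        · intro v hv
          rw [Walk.support_cons, List.mem_cons] at hv
          rcases hv with rfl | hv
          · exact hx'A
          · exact hsupp v hv
      have := le_csSup hbdd hP'
      omega
    -- the path from x to x' along p must be the single edge
    have hedge : (Walk.cons hadj Walk.nil : F.Walk x x').IsPath := by
      rw [Walk.cons_isPath_iff]
      exact ⟨Walk.IsPath.nil, by simp [hadj.ne]⟩
    have htake : ((Walk.cons h q).takeUntil x' hx'supp).IsPath :=
      hp.takeUntil _
    have hpatheq : ((Walk.cons h q).takeUntil x' hx'supp) =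
        (Walk.cons hadj Walk.nil : F.Walk x x') := by
      have := hacyc.path_unique ⟨_, htake⟩ ⟨_, hedge⟩
      exact congrArg Subtype.val this
    have hspec := (Walk.cons h q).take_spec hx'supp
    rw [hpatheq] at hspec
    -- hspec : (cons hadj nil).append (dropUntil ...) = cons h q
    have hsup := congrArg Walk.support hspec
    rw [Walk.support_append, Walk.support_cons, Walk.support_cons,
      q.support_eq_cons] at hsup
    simp only [Walk.support_cons, Walk.support_nil, List.cons_append,
      List.nil_append, List.cons.injEq] at hsup
    exact hsup.2.1

lemma indep_subset_aux {V : Type} {G : SimpleGraph V} {I J : Finset V}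
    (h : IsIndepFinset G J) (hIJ : I ⊆ J) : IsIndepFinset G I :=
  fun x hx y hy => h x (hIJ hx) y (hIJ hy)

lemma key_lemma {V : Type} [Fintype V] [DecidableEq V] (F : SimpleGraph V)
    (hacyc : F.IsAcyclic) :
    ∀ (n : ℕ) (A S : Finset V), A.card ≤ n → S ⊆ A → IsIndepFinset F S →
      (∀ I : Finset V, ↑I ⊆ (A : Set V) → IsIndepFinset F I → I.card ≤ S.card) →
      (∃ w ∈ A, w ∉ S) →
      ∃ u w, u ∈ A ∧ w ∈ A ∧ w ∉ S ∧ F.Adj u w ∧ ∀ x ∈ A, F.Adj u x → x = w := by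
  intro n
  induction n with
  | zero =>
    intro A S hcard _ _ _ hne
    obtain ⟨w, hw, _⟩ := hne
    rw [Nat.le_zero, Finset.card_eq_zero] at hcard
    simp [hcard] at hw
  | succ n IH =>
    intro A S hcard hSA hind hloc hne
    obtain ⟨w₀, hw₀A, hw₀S⟩ := hne
    -- w₀ has a neighbor in S
    have hs₀ : ∃ s ∈ S, F.Adj w₀ s := by
      by_contra hcon
      push_neg at hcon
      have hindins : IsIndepFinset F (insert w₀ S) := by
        intro x hx y hy hadj
        rw [Finset.mem_insert] at hx hy
        rcases hx with rfl | hx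
        · rcases hy with rfl | hy
          · exact F.irrefl hadj
          · exact hcon y hy hadj
        · rcases hy with rfl | hy
          · exact hcon x hx hadj.symm
          · exact hind x hx y hy hadj
      have hsub : ↑(insert w₀ S) ⊆ (A : Set V) := by
        intro x hx
        rw [Finset.coe_insert, Set.mem_insert_iff] at hx
        rcases hx with rfl | hx
        · exact hw₀A
        · exact hSA hx
      have := hloc _ hsub hindins
      rw [Finset.card_insert_of_notMem hw₀S] at this
      omega
    obtain ⟨s₀, hs₀S, hs₀adj⟩ := hs₀
    -- find a leaf u with unique neighbor p
    obtain ⟨u, p, huA, hpA, hup, hleaf⟩ :=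
      leaf_lemma F hacyc A hw₀A (hSA hs₀S) hs₀adj
    by_cases hpS : p ∈ S
    · -- the leaf's neighbor is in S
      have huS : u ∉ S := fun huS => hind u huS p hpS hup
      by_cases hX : ∃ x ∈ A, x ∉ S ∧ x ≠ u
      · -- recurse on A minus {u, p}
        obtain ⟨x₀, hx₀A, hx₀S, hx₀u⟩ := hX
        set A'' := (A.erase u).erase p with hA''
        set S'' := S.erase p with hS''
        have hmemA'' : ∀ y, y ∈ A'' ↔ y ∈ A ∧ y ≠ u ∧ y ≠ p := by
          intro y
          simp only [hA'', Finset.mem_erase]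
          tauto
        have hcard'' : A''.card ≤ n := by
          have h1 : A''.card ≤ (A.erase u).card := Finset.card_erase_le
          have h2 : (A.erase u).card = A.card - 1 := Finset.card_erase_of_mem huA
          have h3 : 1 ≤ A.card := Finset.card_pos.2 ⟨u, huA⟩
          omega
        have hS''A'' : S'' ⊆ A'' := by
          intro s hs
          rw [hS'', Finset.mem_erase] at hs
          rw [hmemA'']
          exact ⟨hSA hs.2, fun h => huS (h ▸ hs.2), hs.1⟩
        have hind'' : IsIndepFinset F S'' :=
          indep_subset_aux hind (Finset.erase_subset _ _)
        have hloc'' : ∀ I : Finset V, ↑I ⊆ (A'' : Set V) → IsIndepFinset F I →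
            I.card ≤ S''.card := by
          intro I hIA hI
          have huI : u ∉ I := fun h => by
            have := hIA h
            rw [Finset.mem_coe, hmemA''] at this
            exact this.2.1 rfl
          have hins : IsIndepFinset F (insert u I) := by
            intro x hx y hy hadj
            rw [Finset.mem_insert] at hx hy
            have key : ∀ z ∈ I, ¬ F.Adj u z := by
              intro z hz hadj'
              have hzA'' := hIA hz
              rw [Finset.mem_coe, hmemA''] at hzA''
              exact hzA''.2.2 (hleaf z hzA''.1 hadj')
            rcases hx with rfl | hx
            · rcases hy with rfl | hy
              · exact F.irrefl hadj
              · exact key y hy hadj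
            · rcases hy with rfl | hy
              · exact key x hx hadj.symm
              · exact hI x hx y hy hadj
          have hsub : ↑(insert u I) ⊆ (A : Set V) := by
            intro z hz
            rw [Finset.coe_insert, Set.mem_insert_iff] at hz
            rcases hz with rfl | hz
            · exact huA
            · have := hIA hz
              rw [Finset.mem_coe, hmemA''] at this
              exact this.1
          have := hloc _ hsub hins
          rw [Finset.card_insert_of_notMem huI] at this
          have hScard : S''.card = S.card - 1 := Finset.card_erase_of_mem hpS
          have : 1 ≤ S.card := Finset.card_pos.2 ⟨p, hpS⟩
          omega
        have hne'' : ∃ w ∈ A'', w ∉ S'' := by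
          refine ⟨x₀, ?_, fun h => hx₀S (Finset.mem_of_mem_erase h)⟩
          rw [hmemA'']
          exact ⟨hx₀A, hx₀u, fun h => hx₀S (h ▸ hpS)⟩
        obtain ⟨u₂, w₂, hu₂A'', hw₂A'', hw₂S'', hadj₂, hleaf₂⟩ :=
          IH A'' S'' hcard'' hS''A'' hind'' hloc'' hne''
        have hu₂A : u₂ ∈ A := ((hmemA'' u₂).1 hu₂A'').1
        have hu₂u : u₂ ≠ u := ((hmemA'' u₂).1 hu₂A'').2.1
        have hu₂p : u₂ ≠ p := ((hmemA'' u₂).1 hu₂A'').2.2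
        have hw₂A : w₂ ∈ A := ((hmemA'' w₂).1 hw₂A'').1
        have hw₂p : w₂ ≠ p := ((hmemA'' w₂).1 hw₂A'').2.2
        have hw₂u : w₂ ≠ u := ((hmemA'' w₂).1 hw₂A'').2.1
        have hw₂S : w₂ ∉ S := fun h => hw₂S'' (Finset.mem_erase.2 ⟨hw₂p, h⟩)
        have h7 : ¬ F.Adj u₂ u := fun hadj => hu₂p (hleaf u₂ hu₂A hadj.symm)
        by_cases h9 : F.Adj u₂ p
        · -- contradiction: (S \ {p}) ∪ {u, u₂} is a bigger independent set
          exfalso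
          have hu₂S : u₂ ∉ S := fun h => hind u₂ h p hpS h9
          set T := insert u₂ (insert u (S.erase p)) with hT
          have hkey2 : ∀ z ∈ S.erase p, ¬ F.Adj u₂ z := by
            intro z hz hadj
            rw [Finset.mem_erase] at hz
            have hzA'' : z ∈ A'' := by
              rw [hmemA'']
              exact ⟨hSA hz.2, fun h => huS (h ▸ hz.2), hz.1⟩
            exact hw₂S (hleaf₂ z hzA'' hadj ▸ hz.2)
          have hkeyu : ∀ z ∈ S.erase p, ¬ F.Adj u z := by
            intro z hz hadj
            rw [Finset.mem_erase] at hz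
            exact hz.1 (hleaf z (hSA hz.2) hadj)
          have hTind : IsIndepFinset F T := by
            intro x hx y hy hadj
            rw [hT, Finset.mem_insert, Finset.mem_insert] at hx hy
            rcases hx with rfl | rfl | hx
            · rcases hy with rfl | rfl | hy
              · exact F.irrefl hadj
              · exact h7 hadj
              · exact hkey2 y hy hadj
            · rcases hy with rfl | rfl | hy
              · exact h7 hadj.symm
              · exact F.irrefl hadj
              · exact hkeyu y hy hadj
            · rcases hy with rfl | rfl | hy
              · exact hkey2 x hx hadj.symm
              · exact hkeyu x hx hadj.symm
              · exact hind x (Finset.mem_of_mem_erase hx) y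
                  (Finset.mem_of_mem_erase hy) hadj
          have hTsub : ↑T ⊆ (A : Set V) := by
            intro z hz
            rw [Finset.mem_coe, hT, Finset.mem_insert, Finset.mem_insert] at hz
            rcases hz with rfl | rfl | hz
            · exact hu₂A
            · exact huA
            · exact hSA (Finset.mem_of_mem_erase hz)
          have hu2notin : u₂ ∉ insert u (S.erase p) := by
            rw [Finset.mem_insert, Finset.mem_erase]
            push_neg
            exact ⟨hu₂u, fun _ => hu₂S⟩
          have hunotin : u ∉ S.erase p := fun h => huS (Finset.mem_of_mem_erase h)
          have hTcard : T.card = S.card + 1 := by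
            rw [hT, Finset.card_insert_of_notMem hu2notin,
              Finset.card_insert_of_notMem hunotin,
              Finset.card_erase_of_mem hpS]
            have : 1 ≤ S.card := Finset.card_pos.2 ⟨p, hpS⟩
            omega
          have := hloc T hTsub hTind
          omega
        · -- (u₂, w₂) is a good pair in A
          refine ⟨u₂, w₂, hu₂A, hw₂A, hw₂S, hadj₂, ?_⟩
          intro x hxA hadj
          by_cases hxu : x = u
          · exact absurd (hxu ▸ hadj) h7
          by_cases hxp : x = p
          · exact absurd (hxp ▸ hadj) h9
          exact hleaf₂ x ((hmemA'' x).2 ⟨hxA, hxu, hxp⟩) hadj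
      · -- A \ S = {u} : then p is a leaf with unique neighbor u ∉ S
        push_neg at hX
        refine ⟨p, u, hpA, huA, huS, hup.symm, ?_⟩
        intro x hxA hadj
        by_cases hxS : x ∈ S
        · exact absurd hadj (hind p hpS x hxS)
        · exact hX x hxA hxS
    · -- the leaf's neighbor is not in S: (u, p) is a good pair
      exact ⟨u, p, huA, hpA, hpS, hup, hleaf⟩

lemma aux_order {V : Type} [Fintype V] [DecidableEq V] (F : SimpleGraph V)
    (hacyc : F.IsAcyclic) (S : Finset V) (hS : IsIndepFinset F S)
    (hmax : ∀ I : Finset V, IsIndepFinset F I → I.card ≤ S.card) :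
    ∀ (n : ℕ) (A : Finset V), A.card ≤ n → S ⊆ A →
    ∃ L : List V, L.Nodup ∧ (∀ x, x ∈ L ↔ (x ∈ A ∧ x ∉ S)) ∧
      ∀ i : Fin L.length, ∃ u,
        DomIn Fᶜ.Adj {x : V | x ∈ A ∧ x ∉ L.take i.val} u (L.get i) := by
  intro n
  induction n with
  | zero =>
    intro A hcard hSA
    refine ⟨[], List.nodup_nil, ?_, fun i => absurd i.isLt (by simp)⟩
    intro x
    rw [Nat.le_zero, Finset.card_eq_zero] at hcard
    simp [hcard]
  | succ n IH =>
    intro A hcard hSA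
    by_cases hAS : ∀ x ∈ A, x ∈ S
    · refine ⟨[], List.nodup_nil, ?_, fun i => absurd i.isLt (by simp)⟩
      intro x
      simp only [List.not_mem_nil, false_iff, not_and, not_not]
      exact hAS x
    · push_neg at hAS
      obtain ⟨u, w, huA, hwA, hwS, hadj, hleaf⟩ :=
        key_lemma F hacyc (n + 1) A S hcard hSA hS
          (fun I _ hI => hmax I hI) hAS
      have hcard' : (A.erase w).card ≤ n := by
        have := Finset.card_erase_of_mem hwA
        omega
      have hSA' : S ⊆ A.erase w := fun s hs =>
        Finset.mem_erase.2 ⟨fun h => hwS (h ▸ hs), hSA hs⟩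
      obtain ⟨L', hnd', hmem', hdom'⟩ := IH (A.erase w) hcard' hSA'
      refine ⟨w :: L', ?_, ?_, ?_⟩
      · refine List.nodup_cons.2 ⟨fun h => ?_, hnd'⟩
        have := ((hmem' w).1 h).1
        exact (Finset.mem_erase.1 this).1 rfl
      · intro x
        rw [List.mem_cons, hmem' x, Finset.mem_erase]
        constructor
        · rintro (rfl | ⟨⟨_, hx⟩, hxS⟩)
          · exact ⟨hwA, hwS⟩
          · exact ⟨hx, hxS⟩
        · rintro ⟨hxA, hxS⟩
          by_cases hxw : x = w
          · exact Or.inl hxw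
          · exact Or.inr ⟨⟨hxw, hxA⟩, hxS⟩
      · intro i
        induction i using Fin.cases with
        | zero =>
          refine ⟨u, ⟨huA, by simp⟩, ⟨hwA, by simp⟩, hadj.ne, ?_⟩
          rintro x ⟨hxA, -⟩ hcadj
          rw [SimpleGraph.compl_adj] at hcadj ⊢
          refine ⟨fun h => hcadj.2 (h ▸ hadj.symm), fun h => ?_⟩
          exact hcadj.1 (hleaf x hxA h).symm
        | succ j =>
          have hj : (j : ℕ) < L'.length := by
            have := j.isLt
            omega
          obtain ⟨u', hu'⟩ := hdom' ⟨j, hj⟩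
          refine ⟨u', ?_⟩
          have hset : {x : V | x ∈ A ∧ x ∉ (w :: L').take (j.succ : ℕ)} =
              {x : V | x ∈ A.erase w ∧ x ∉ L'.take (j : ℕ)} := by
            ext x
            simp only [Set.mem_setOf_eq, Fin.val_succ, List.take_succ_cons,
              List.mem_cons, Finset.mem_erase, not_or]
            tauto
          have hget : (w :: L').get j.succ = L'.get ⟨j, hj⟩ := by
            simp [List.get_cons_succ]
          rw [hset, hget]
          exact hu'

/-- if `F` is a finite forest and `m` is the maximal cardinality of an
independent set in `F`, then the complement graph `F̄` reduces to an induced subgraph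
which is a complete graph on `m` vertices. -/
theorem forest_complement_reduces_to_complete {V : Type} [Fintype V] [DecidableEq V]
    (F : SimpleGraph V) (hacyc : F.IsAcyclic) (m : ℕ)
    (hmax : IsGreatest {k : ℕ | ∃ I : Finset V, IsIndepFinset F I ∧ I.card = k} m) :
    ∃ S : Finset V, S.card = m ∧
      (∀ x ∈ S, ∀ y ∈ S, x ≠ y → Fᶜ.Adj x y) ∧
      ReducesTo Fᶜ.Adj (↑S : Set V) := by
  obtain ⟨S, hSind, hScard⟩ := hmax.1
  have hmaxcard : ∀ I : Finset V, IsIndepFinset F I → I.card ≤ S.card :=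
    fun I hI => hScard ▸ hmax.2 ⟨I, hI, rfl⟩
  refine ⟨S, hScard, fun x hx y hy hxy => ⟨hxy, hSind x hx y hy⟩, ?_⟩
  obtain ⟨L, hnd, hmem, hdom⟩ := aux_order F hacyc S hSind hmaxcard
    (Fintype.card V) Finset.univ (by simp) (Finset.subset_univ S)
  refine ⟨L, hnd, ?_, ?_⟩
  · intro x
    rw [hmem x]
    simp
  · intro i
    obtain ⟨u, hu⟩ := hdom i
    refine ⟨u, ?_⟩
    have : {x : V | x ∈ Finset.univ ∧ x ∉ L.take i.val} =
        {x : V | x ∉ L.take i.val} := by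
      ext x; simp
    rwa [this] at hu
end

section
/- Let T be a finite nonempty tree and let γ be a graph automorphism of T with γ∘γ = id. Then either γ fixes some vertex of T (there exists a vertex v with γ(v) = v), or γ flips some edge of T (there exist adjacent vertices a, b with γ(a) = b and γ(b) = a). -/
/-!
Take any vertex `v` and the path from `v` to `γ v`. Since paths in a tree are unique and `γ`
exchanges the ends, `γ` maps this path onto its reverse. Hence `γ` fixes its middle vertex if its
length is even and flips its middle edge if its length is odd.
-/

open Function

namespace SimpleGraph

variable {V : Type*} {G : SimpleGraph V}

theorem IsAcyclic.apply_getVert_of_swap (hG : G.IsAcyclic) {f : G →g G} (hf : Injective f)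
    {u v : V} (hu : f u = v) (hv : f v = u) {p : G.Walk u v} (hp : p.IsPath) (i : ℕ) :
    f (p.getVert i) = p.getVert (p.length - i) := by
  have hmap : ((p.map f).copy hu hv).IsPath := by simpa using hp.map hf
  have hrev : (p.map f).copy hu hv = p.reverse :=
    congrArg Subtype.val ((hG.subsingleton_path v u).elim ⟨_, hmap⟩ ⟨_, hp.reverse⟩)
  simpa [Walk.getVert_map, Walk.getVert_reverse] using congrArg (·.getVert i) hrev

end SimpleGraph

open SimpleGraph

theorem tree_involution_fixes_vertex_or_flips_edge_general {V : Type}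
    (T : SimpleGraph V) (hconn : T.Connected) (hacyc : T.IsAcyclic)
    (γ : T ≃g T) (hinv : ∀ x : V, γ (γ x) = x) :
    (∃ v : V, γ v = v) ∨ ∃ a b : V, T.Adj a b ∧ γ a = b ∧ γ b = a := by
  obtain ⟨v⟩ := hconn.nonempty
  obtain ⟨p, hp⟩ := hconn.preconnected.exists_isPath v (γ v)
  have hswap := hacyc.apply_getVert_of_swap (f := γ.toHom) γ.injective rfl (hinv v) hp
  obtain ⟨k, hk | hk⟩ := Nat.even_or_odd' p.length
  · left
    exact ⟨p.getVert k, by simpa [hk, two_mul] using hswap k⟩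
  · right
    refine ⟨p.getVert k, p.getVert (k + 1), p.adj_getVert_succ (by omega), ?_, ?_⟩
    · simpa [hk, two_mul, add_assoc, add_comm 1] using hswap k
    · simpa [hk, two_mul] using hswap (k + 1)

/-- an involutive automorphism `γ` of a finite nonempty tree either fixes
a vertex or flips an edge. -/
theorem tree_involution_fixes_vertex_or_flips_edge {V : Type} [Fintype V] [Nonempty V]
    (T : SimpleGraph V) (hconn : T.Connected) (hacyc : T.IsAcyclic)
    (γ : T ≃g T) (hinv : ∀ x : V, γ (γ x) = x) :
    (∃ v : V, γ v = v) ∨ ∃ a b : V, T.Adj a b ∧ γ a = b ∧ γ b = a :=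
  tree_involution_fixes_vertex_or_flips_edge_general T hconn hacyc γ hinv
end
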